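/- arXiv:0906.4509 — 5 statements merged into one kernel-verified Lean document; each statement's English description precedes it below -/
import Mathlib

section
/- Let f be the map sending W ∈ 𝒜 to the block [σ(W∩H) ∪ (W∖H)] and W ∈ ℬ to the block [σ(W)]. Then f is a bijection from 𝒜 ∪ ℬ onto the block set 𝒜' ∪ ℬ' of the Jungnickel–Tonchev design, and for all W₁, W₂ ∈ 𝒜 ∪ ℬ, W₁ and W₂ are adjacent in the twisted Grassmann graph J̃_q(2e+1,e) if and only if |f(W₁) ∩ f(W₂)| = (q^e − 1)/(q − 1). Consequently J̃_q(2e+1,e) is isomorphic to the block graph of the design, where two blocks are adjacent when their intersection has size (q^e − 1)/(q − 1). -/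
/-- The set of projective points (1-dimensional subspaces) contained in a subset `S` of `V`. -/
def projPts (K : Type*) {V : Type*} [Field K] [AddCommGroup V] [Module K V]
    (S : Set V) : Set (Submodule K V) :=
  {P | Module.finrank K P = 1 ∧ (P : Set V) ⊆ S}

/-- `𝒜`: the (e+1)-dimensional subspaces of `V` not contained in `H`. -/
def setA {K V : Type*} [Field K] [AddCommGroup V] [Module K V]
    (e : ℕ) (H : Submodule K V) : Set (Submodule K V) :=
  {W | Module.finrank K W = e + 1 ∧ ¬ W ≤ H}

/-- `ℬ`: the (e-1)-dimensional subspaces of `H`. -/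
def setB {K V : Type*} [Field K] [AddCommGroup V] [Module K V]
    (e : ℕ) (H : Submodule K V) : Set (Submodule K V) :=
  {W | Module.finrank K W = e - 1 ∧ W ≤ H}

/-- The block `[σ(W ∩ H) ∪ (W \ H)]` associated to `W ∈ 𝒜`. -/
def blockA {K V : Type*} [Field K] [AddCommGroup V] [Module K V]
    (σ : Submodule K V → Submodule K V) (H W : Submodule K V) : Set (Submodule K V) :=
  projPts K ((σ (W ⊓ H) : Set V) ∪ ((W : Set V) \ (H : Set V)))

/-- The block `[σ(W)]` associated to `W ∈ ℬ`. -/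
def blockB {K V : Type*} [Field K] [AddCommGroup V] [Module K V]
    (σ : Submodule K V → Submodule K V) (W : Submodule K V) : Set (Submodule K V) :=
  projPts K (σ W : Set V)

/-- The block set `𝒜' ∪ ℬ'` of the Jungnickel–Tonchev design. -/
def blocksJT {K V : Type*} [Field K] [AddCommGroup V] [Module K V]
    (e : ℕ) (σ : Submodule K V → Submodule K V) (H : Submodule K V) :
    Set (Set (Submodule K V)) :=
  (blockA σ H '' setA e H) ∪
    {B | ∃ W : Submodule K V, Module.finrank K W = e + 1 ∧ W ≤ H ∧ B = projPts K (W : Set V)}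

open Classical in
/-- The map `f` sending `W ∈ 𝒜` to `[σ(W ∩ H) ∪ (W \ H)]` and `W ∈ ℬ` to `[σ(W)]`. -/
noncomputable def fJT {K V : Type*} [Field K] [AddCommGroup V] [Module K V]
    (σ : Submodule K V → Submodule K V) (e : ℕ) (H : Submodule K V)
    (W : Submodule K V) : Set (Submodule K V) :=
  if W ∈ setA e H then blockA σ H W else blockB σ W

/-- The adjacency rule of the twisted Grassmann graph. -/
def twistedAdj {K V : Type*} [Field K] [AddCommGroup V] [Module K V]
    (e : ℕ) (H : Submodule K V) (W₁ W₂ : Submodule K V) : Prop :=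
  (W₁ ∈ setA e H ∧ W₂ ∈ setA e H ∧ Module.finrank K ↥(W₁ ⊓ W₂) = e) ∨
  (W₁ ∈ setA e H ∧ W₂ ∈ setB e H ∧ W₂ ≤ W₁) ∨
  (W₁ ∈ setB e H ∧ W₂ ∈ setA e H ∧ W₁ ≤ W₂) ∨
  (W₁ ∈ setB e H ∧ W₂ ∈ setB e H ∧ Module.finrank K ↥(W₁ ⊓ W₂) = e - 2)

/-- The twisted Grassmann graph `J̃_q(2e+1, e)`, on the vertex set `𝒜 ∪ ℬ`. -/
def twistedGraph {K V : Type*} [Field K] [AddCommGroup V] [Module K V]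
    (e : ℕ) (H : Submodule K V) : SimpleGraph {W : Submodule K V // W ∈ setA e H ∪ setB e H} :=
  SimpleGraph.fromRel fun W₁ W₂ => twistedAdj e H W₁.1 W₂.1

/-- The block graph of the Jungnickel–Tonchev design: two distinct blocks are adjacent
whenever their intersection has size `(q^e - 1)/(q - 1)`. -/
def blockGraphJT {K V : Type*} [Field K] [AddCommGroup V] [Module K V]
    (q e : ℕ) (σ : Submodule K V → Submodule K V) (H : Submodule K V) :
    SimpleGraph {B : Set (Submodule K V) // B ∈ blocksJT e σ H} :=
  SimpleGraph.fromRel fun B₁ B₂ => (B₁.1 ∩ B₂.1).ncard = (q ^ e - 1) / (q - 1)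

/-!
For `W ∈ 𝒜` the block `f W` consists of the points of `σ (W ∩ H)` and the points of `W` off `H`;
for `W ∈ ℬ` it is the set of points of `σ W`. Because `σ` turns sums into intersections and
`dim σ X = 2e - dim X`, the intersection `f W₁ ∩ f W₂` has as many points as a subspace of dimension
`dim (W₁ ∩ W₂)`, `2e - dim ((W₁ ∩ H) + W₂)` or `2 + dim (W₁ ∩ W₂)`, according as `W₁, W₂` lie in
`𝒜, 𝒜`, in `𝒜, ℬ` or in `ℬ, ℬ`. A `d`-dimensional space has `(q^d - 1)/(q - 1)` points, which is
injective in `d`, so the intersection has `(q^e - 1)/(q - 1)` points exactly when that dimension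
is `e`, which is the adjacency rule of `J̃_q(2e+1, e)`.
-/

open Module

section ProjectivePoints

variable {K V : Type*} [Field K] [AddCommGroup V] [Module K V]

theorem mem_projPts_coe {U P : Submodule K V} :
    P ∈ projPts K (U : Set V) ↔ finrank K P = 1 ∧ P ≤ U := by
  simp [projPts]

theorem projPts_inter (S T : Set V) : projPts K (S ∩ T) = projPts K S ∩ projPts K T := by
  ext P
  simp only [projPts, Set.mem_ofPred_eq, Set.mem_inter_iff, Set.subset_inter_iff]
  tauto

theorem projPts_mono {S T : Set V} (h : S ⊆ T) : projPts K S ⊆ projPts K T :=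
  fun _ hP => ⟨hP.1, hP.2.trans h⟩

theorem projPts_coe_mono {U W : Submodule K V} (h : U ≤ W) :
    projPts K (U : Set V) ⊆ projPts K (W : Set V) :=
  projPts_mono (SetLike.coe_subset_coe.2 h)

theorem span_singleton_mem_projPts {U : Submodule K V} {v : V} (hv : v ∈ U) (hv0 : v ≠ 0) :
    K ∙ v ∈ projPts K (U : Set V) :=
  mem_projPts_coe.2 ⟨finrank_span_singleton hv0, (Submodule.span_singleton_le_iff_mem _ _).2 hv⟩

theorem Submodule.eq_span_singleton_of_finrank_eq_one {P : Submodule K V}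
    (hP : finrank K P = 1) {v : V} (hv : v ∈ P) (hv0 : v ≠ 0) : P = K ∙ v :=
  have : Module.Finite K P := Module.finite_of_finrank_eq_succ hP
  (Submodule.eq_of_le_of_finrank_eq ((Submodule.span_singleton_le_iff_mem _ _).2 hv)
    (by rw [finrank_span_singleton hv0, hP])).symm

/-- A point is spanned by any one of its nonzero vectors, so it cannot be split between `S` and
`W \ H`. -/
theorem projPts_union_diff (S W H : Submodule K V) :
    projPts K ((S : Set V) ∪ (W : Set V) \ (H : Set V)) =
      projPts K (S : Set V) ∪ (projPts K (W : Set V) \ projPts K (H : Set V)) := by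
  ext P
  rw [Set.mem_union, Set.mem_sdiff, mem_projPts_coe, mem_projPts_coe, mem_projPts_coe]
  simp only [projPts, Set.mem_ofPred_eq]
  refine ⟨fun ⟨hP, hPsub⟩ => ?_, ?_⟩
  · obtain ⟨v, hvP, hv0⟩ := P.ne_bot_iff.1 (by rintro rfl; simp at hP)
    obtain rfl := Submodule.eq_span_singleton_of_finrank_eq_one hP hvP hv0
    simp only [Submodule.span_singleton_le_iff_mem]
    rcases hPsub hvP with hvS | ⟨hvW, hvH⟩
    exacts [Or.inl ⟨hP, hvS⟩, Or.inr ⟨⟨hP, hvW⟩, fun h => hvH h.2⟩]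
  · rintro (⟨hP, hPS⟩ | ⟨⟨hP, hPW⟩, hPH⟩)
    · exact ⟨hP, fun u hu => Or.inl (hPS hu)⟩
    · refine ⟨hP, fun u hu => ?_⟩
      by_cases hu0 : u = 0
      · exact Or.inl (hu0 ▸ S.zero_mem)
      · refine Or.inr ⟨hPW hu, fun huH => hPH ⟨hP, ?_⟩⟩
        rw [Submodule.eq_span_singleton_of_finrank_eq_one hP hu hu0]
        exact (Submodule.span_singleton_le_iff_mem _ _).2 huH

theorem le_of_projPts_subset {U W : Submodule K V}
    (h : projPts K (U : Set V) ⊆ projPts K (W : Set V)) : U ≤ W := by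
  intro v hv
  by_cases hv0 : v = 0
  · exact hv0 ▸ W.zero_mem
  · exact (mem_projPts_coe.1 (h (span_singleton_mem_projPts hv hv0))).2
      (Submodule.mem_span_singleton_self v)

/-- A vector `v ∈ U ∩ H` is the difference of `v + w` and `w`, both outside `H`, for any
`w ∈ U \ H`. -/
theorem le_of_projPts_diff_subset {U W H : Submodule K V} (hU : ¬ U ≤ H)
    (h : projPts K (U : Set V) \ projPts K (H : Set V) ⊆
      projPts K (W : Set V) \ projPts K (H : Set V)) : U ≤ W := by
  have hout : ∀ v ∈ U, v ∉ H → v ∈ W := fun v hvU hvH => by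
    have hv0 : v ≠ 0 := fun hv => hvH (hv ▸ H.zero_mem)
    have hmem := h ⟨span_singleton_mem_projPts hvU hv0, fun hH =>
      hvH ((mem_projPts_coe.1 hH).2 (Submodule.mem_span_singleton_self v))⟩
    exact (mem_projPts_coe.1 hmem.1).2 (Submodule.mem_span_singleton_self v)
  obtain ⟨w, hwU, hwH⟩ := SetLike.not_le_iff_exists.1 hU
  intro v hv
  by_cases hvH : v ∈ H
  · have hvw : v + w ∉ H := fun h => hwH (by simpa using H.sub_mem h hvH)
    simpa using W.sub_mem (hout _ (U.add_mem hv hwU) hvw) (hout w hwU hwH)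
  · exact hout v hv hvH

end ProjectivePoints

theorem Nat.geomSum_range_strictMono {q : ℕ} (hq : 2 ≤ q) :
    StrictMono fun d => ∑ i ∈ Finset.range d, q ^ i :=
  strictMono_nat_of_lt_succ fun d => by
    simpa [Finset.sum_range_succ] using Nat.pow_pos (n := d) (by omega : 0 < q)

section Counting

variable {K V : Type*} [Field K] [Finite K] [AddCommGroup V] [Module K V]

theorem ncard_projPts_coe (U : Submodule K V) :
    (projPts K (U : Set V)).ncard = ∑ i ∈ Finset.range (finrank K U), Nat.card K ^ i := by
  have himage : projPts K (U : Set V) =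
      Submodule.map U.subtype '' {P : Submodule K U | finrank K P = 1} := by
    ext P
    simp only [mem_projPts_coe, Set.mem_image, Set.mem_ofPred_eq]
    refine ⟨fun ⟨hP, hPU⟩ => ⟨Submodule.comap U.subtype P, ?_, ?_⟩, ?_⟩
    · rwa [← Submodule.finrank_map_subtype_eq, Submodule.map_comap_subtype, inf_eq_right.2 hPU]
    · rw [Submodule.map_comap_subtype, inf_eq_right.2 hPU]
    · rintro ⟨P, hP, rfl⟩
      exact ⟨by rwa [Submodule.finrank_map_subtype_eq], Submodule.map_subtype_le _ _⟩
  rw [himage, Set.ncard_image_of_injective _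
    (Submodule.map_injective_of_injective U.injective_subtype), ← Nat.card_coe_set_eq,
    ← Projectivization.card_of_finrank K U rfl]
  exact Nat.card_congr (Projectivization.equivSubmodule K U).symm

theorem ncard_projPts_coe_eq_geomSum_iff (U : Submodule K V) (d : ℕ) :
    (projPts K (U : Set V)).ncard = ∑ i ∈ Finset.range d, Nat.card K ^ i ↔ finrank K U = d := by
  rw [ncard_projPts_coe]
  exact (Nat.geomSum_range_strictMono Finite.one_lt_card).injective.eq_iff

theorem ncard_projPts_union_diff [FiniteDimensional K V] {S U H : Submodule K V} (hSH : S ≤ H)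
    (hS : finrank K S = finrank K ↥(U ⊓ H)) :
    (projPts K (S : Set V) ∪ (projPts K (U : Set V) \ projPts K (H : Set V))).ncard =
      (projPts K (U : Set V)).ncard := by
  have : Finite V := Module.finite_of_finite K
  have : Finite (Submodule K V) := Finite.of_injective _ SetLike.coe_injective
  have hdisj :
      Disjoint (projPts K (S : Set V)) (projPts K (U : Set V) \ projPts K (H : Set V)) :=
    Set.disjoint_left.2 fun P hPS hPU => hPU.2 (projPts_coe_mono hSH hPS)
  have hdiff : projPts K (U : Set V) \ projPts K (H : Set V) =
      projPts K (U : Set V) \ projPts K ((U ⊓ H : Submodule K V) : Set V) := by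
    rw [Submodule.coe_inf, projPts_inter, Set.sdiff_self_inter]
  have hsub : projPts K ((U ⊓ H : Submodule K V) : Set V) ⊆ projPts K (U : Set V) :=
    projPts_coe_mono inf_le_left
  have hle := Set.ncard_le_ncard hsub
  rw [Set.ncard_union_eq hdisj, hdiff, Set.ncard_sdiff hsub, ncard_projPts_coe S,
    hS, ← ncard_projPts_coe]
  omega

end Counting

theorem Submodule.finrank_inf_add_one_of_not_le {K V : Type*} [Field K] [AddCommGroup V]
    [Module K V] [FiniteDimensional K V] {W H : Submodule K V}
    (hH : finrank K H + 1 = finrank K V) (hW : ¬ W ≤ H) :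
    finrank K ↥(W ⊓ H) + 1 = finrank K W := by
  have hlt : finrank K H < finrank K ↥(W ⊔ H) := Submodule.finrank_lt_finrank_of_lt
    (lt_of_le_of_ne le_sup_right fun h => hW (h ▸ le_sup_left))
  have := Submodule.finrank_le (W ⊔ H)
  have := Submodule.finrank_sup_add_finrank_inf_eq W H
  omega

/-- A polarity of the hyperplane `H`, seen through its action on the subspaces of `H`. -/
structure IsPolarity {K V : Type*} [Field K] [AddCommGroup V] [Module K V]
    (H : Submodule K V) (σ : Submodule K V → Submodule K V) : Prop where
  le : ∀ W ≤ H, σ W ≤ H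
  involutive : ∀ W ≤ H, σ (σ W) = W
  inf_eq_sup : ∀ W₁ W₂, W₁ ≤ H → W₂ ≤ H → σ W₁ ⊓ σ W₂ = σ (W₁ ⊔ W₂)
  finrank_eq : ∀ W ≤ H, finrank K (σ W) = finrank K H - finrank K W

section TwistedGrassmann

variable {K V : Type*} [Field K] [AddCommGroup V] [Module K V] {e : ℕ} {H : Submodule K V}
  {σ : Submodule K V → Submodule K V}

theorem notMem_setB_of_mem_setA {W : Submodule K V} (hW : W ∈ setA e H) : W ∉ setB e H :=
  fun hB => hW.2 hB.2

theorem fJT_of_mem_setA {W : Submodule K V} (hW : W ∈ setA e H) :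
    fJT σ e H W = blockA σ H W :=
  if_pos hW

theorem fJT_of_mem_setB {W : Submodule K V} (hW : W ∈ setB e H) : fJT σ e H W = blockB σ W :=
  if_neg fun hA => notMem_setB_of_mem_setA hA hW

theorem twistedAdj_comm {W₁ W₂ : Submodule K V} :
    twistedAdj e H W₁ W₂ ↔ twistedAdj e H W₂ W₁ := by
  rw [twistedAdj, twistedAdj, inf_comm W₂ W₁]
  tauto

theorem twistedGraph_adj {W₁ W₂ : {W : Submodule K V // W ∈ setA e H ∪ setB e H}} :
    (twistedGraph e H).Adj W₁ W₂ ↔ W₁.1 ≠ W₂.1 ∧ twistedAdj e H W₁.1 W₂.1 := by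
  rw [twistedGraph, SimpleGraph.fromRel_adj, twistedAdj_comm (W₁ := W₂.1), or_self,
    Subtype.ext_iff.ne]

theorem twistedAdj_iff_of_mem_setA_setA {W₁ W₂ : Submodule K V} (h₁ : W₁ ∈ setA e H)
    (h₂ : W₂ ∈ setA e H) : twistedAdj e H W₁ W₂ ↔ finrank K ↥(W₁ ⊓ W₂) = e := by
  simp [twistedAdj, h₁, h₂, notMem_setB_of_mem_setA h₁, notMem_setB_of_mem_setA h₂]

theorem twistedAdj_iff_of_mem_setA_setB {W₁ W₂ : Submodule K V} (h₁ : W₁ ∈ setA e H)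
    (h₂ : W₂ ∈ setB e H) : twistedAdj e H W₁ W₂ ↔ W₂ ≤ W₁ := by
  have h₂' : W₂ ∉ setA e H := fun hA => notMem_setB_of_mem_setA hA h₂
  simp [twistedAdj, h₁, h₂, h₂', notMem_setB_of_mem_setA h₁]

theorem twistedAdj_iff_of_mem_setB_setB {W₁ W₂ : Submodule K V} (h₁ : W₁ ∈ setB e H)
    (h₂ : W₂ ∈ setB e H) : twistedAdj e H W₁ W₂ ↔ finrank K ↥(W₁ ⊓ W₂) = e - 2 := by
  have h₁' : W₁ ∉ setA e H := fun hA => notMem_setB_of_mem_setA hA h₁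
  have h₂' : W₂ ∉ setA e H := fun hA => notMem_setB_of_mem_setA hA h₂
  simp [twistedAdj, h₁, h₂, h₁', h₂']

end TwistedGrassmann

section Blocks

variable {K V : Type*} [Field K] [AddCommGroup V] [Module K V] {e : ℕ} {H : Submodule K V}
  {σ : Submodule K V → Submodule K V}

theorem blockA_eq (W : Submodule K V) :
    blockA σ H W = projPts K (σ (W ⊓ H) : Set V) ∪
      (projPts K (W : Set V) \ projPts K (H : Set V)) :=
  projPts_union_diff _ _ _

theorem inter_blockA_blockA (hσ : IsPolarity H σ) (W₁ W₂ : Submodule K V) :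
    blockA σ H W₁ ∩ blockA σ H W₂ = projPts K (σ (W₁ ⊓ H ⊔ W₂ ⊓ H) : Set V) ∪
      (projPts K ((W₁ ⊓ W₂ : Submodule K V) : Set V) \ projPts K (H : Set V)) := by
  have h₁ := projPts_coe_mono (K := K) (hσ.le _ (inf_le_right (a := W₁)))
  have h₂ := projPts_coe_mono (K := K) (hσ.le _ (inf_le_right (a := W₂)))
  rw [blockA_eq, blockA_eq, ← hσ.inf_eq_sup _ _ inf_le_right inf_le_right, Submodule.coe_inf,
    Submodule.coe_inf, projPts_inter, projPts_inter]
  ext P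
  have := @h₁ P
  have := @h₂ P
  simp only [Set.mem_inter_iff, Set.mem_union, Set.mem_sdiff]
  tauto

theorem inter_blockA_blockB (hσ : IsPolarity H σ) (W₁ : Submodule K V) {W₂ : Submodule K V}
    (hW₂ : W₂ ≤ H) :
    blockA σ H W₁ ∩ blockB σ W₂ = projPts K (σ (W₁ ⊓ H ⊔ W₂) : Set V) := by
  have h₂ := projPts_coe_mono (K := K) (hσ.le _ hW₂)
  rw [blockA_eq, blockB, ← hσ.inf_eq_sup _ _ inf_le_right hW₂, Submodule.coe_inf, projPts_inter]
  ext P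
  have := @h₂ P
  simp only [Set.mem_inter_iff, Set.mem_union, Set.mem_sdiff]
  tauto

theorem inter_blockB_blockB (hσ : IsPolarity H σ) {W₁ W₂ : Submodule K V} (hW₁ : W₁ ≤ H)
    (hW₂ : W₂ ≤ H) : blockB σ W₁ ∩ blockB σ W₂ = projPts K (σ (W₁ ⊔ W₂) : Set V) := by
  rw [blockB, blockB, ← projPts_inter, ← Submodule.coe_inf, hσ.inf_eq_sup _ _ hW₁ hW₂]

variable [FiniteDimensional K V]

theorem finrank_inf_of_mem_setA (hV : finrank K V = 2 * e + 1) (hH : finrank K H = 2 * e)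
    {W : Submodule K V} (hW : W ∈ setA e H) : finrank K ↥(W ⊓ H) = e := by
  have := Submodule.finrank_inf_add_one_of_not_le (by omega) hW.2
  have := hW.1
  omega

theorem finrank_polarity_sup_eq_iff_le (hV : finrank K V = 2 * e + 1)
    (hH : finrank K H = 2 * e) (hσ : IsPolarity H σ) {W₁ W₂ : Submodule K V}
    (h₁ : W₁ ∈ setA e H) (h₂ : W₂ ∈ setB e H) :
    finrank K ↥(σ (W₁ ⊓ H ⊔ W₂)) = e ↔ W₂ ≤ W₁ := by
  have hle : W₁ ⊓ H ⊔ W₂ ≤ H := sup_le inf_le_right h₂.2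
  have hrank := finrank_inf_of_mem_setA hV hH h₁
  have hup := Submodule.finrank_mono hle
  rw [hσ.finrank_eq _ hle, hH]
  constructor
  · intro h
    have hsup : W₁ ⊓ H ⊔ W₂ = W₁ ⊓ H :=
      (Submodule.eq_of_le_of_finrank_eq le_sup_left (by omega)).symm
    exact (sup_eq_left.1 hsup).trans inf_le_left
  · intro h
    rw [sup_eq_left.2 (le_inf h h₂.2), hrank]
    omega

theorem finrank_polarity_sup_eq_iff (hH : finrank K H = 2 * e) (he : 2 ≤ e)
    (hσ : IsPolarity H σ) {W₁ W₂ : Submodule K V} (h₁ : W₁ ∈ setB e H) (h₂ : W₂ ∈ setB e H) :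
    finrank K ↥(σ (W₁ ⊔ W₂)) = e ↔ finrank K ↥(W₁ ⊓ W₂) = e - 2 := by
  have hmod := Submodule.finrank_sup_add_finrank_inf_eq W₁ W₂
  have hinf := Submodule.finrank_mono (inf_le_left : W₁ ⊓ W₂ ≤ W₁)
  rw [hσ.finrank_eq _ (sup_le h₁.2 h₂.2), hH]
  have := h₁.1
  have := h₂.1
  omega

variable [Finite K]

theorem ncard_inter_blockA_blockA (hV : finrank K V = 2 * e + 1) (hH : finrank K H = 2 * e)
    (hσ : IsPolarity H σ) {W₁ W₂ : Submodule K V} (h₁ : W₁ ∈ setA e H) (h₂ : W₂ ∈ setA e H) :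
    (blockA σ H W₁ ∩ blockA σ H W₂).ncard =
      (projPts K ((W₁ ⊓ W₂ : Submodule K V) : Set V)).ncard := by
  have hle : W₁ ⊓ H ⊔ W₂ ⊓ H ≤ H := sup_le inf_le_right inf_le_right
  rw [inter_blockA_blockA hσ]
  refine ncard_projPts_union_diff (hσ.le _ hle) ?_
  have hmod := Submodule.finrank_sup_add_finrank_inf_eq (W₁ ⊓ H) (W₂ ⊓ H)
  rw [inf_inf_inf_comm, inf_idem, finrank_inf_of_mem_setA hV hH h₁,
    finrank_inf_of_mem_setA hV hH h₂] at hmod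
  rw [hσ.finrank_eq _ hle, hH]
  omega

end Blocks

section Correspondence

variable {K V : Type*} [Field K] [AddCommGroup V] [Module K V] {e : ℕ} {H : Submodule K V}
  {σ : Submodule K V → Submodule K V}

theorem blockA_diff_projPts (hσ : IsPolarity H σ) (W : Submodule K V) :
    blockA σ H W \ projPts K (H : Set V) = projPts K (W : Set V) \ projPts K (H : Set V) := by
  rw [blockA_eq, Set.union_sdiff_distrib, sdiff_idem,
    Set.sdiff_eq_empty.2 (projPts_coe_mono (hσ.le _ inf_le_right)),
    Set.empty_union]

theorem blockB_diff_projPts (hσ : IsPolarity H σ) {W : Submodule K V} (hW : W ≤ H) :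
    blockB σ W \ projPts K (H : Set V) = ∅ :=
  Set.sdiff_eq_empty.2 (projPts_coe_mono (hσ.le _ hW))

theorem mapsTo_fJT (hH : finrank K H = 2 * e) (he : 1 ≤ e) (hσ : IsPolarity H σ) :
    Set.MapsTo (fJT σ e H) (setA e H ∪ setB e H) (blocksJT e σ H) := by
  rintro W (hW | hW)
  · rw [fJT_of_mem_setA hW]
    exact Or.inl ⟨W, hW, rfl⟩
  · rw [fJT_of_mem_setB hW, blockB]
    refine Or.inr ⟨σ W, ?_, hσ.le _ hW.2, rfl⟩
    rw [hσ.finrank_eq _ hW.2, hH, hW.1]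
    omega

/-- `W ∈ 𝒜` is recovered from `blockA σ H W` as the span of its points off `H`, whereas all the
points of `blockB σ W` lie in `H`. -/
theorem injOn_fJT (hσ : IsPolarity H σ) : Set.InjOn (fJT σ e H) (setA e H ∪ setB e H) := by
  rintro W₁ (h₁ | h₁) W₂ (h₂ | h₂) heq
  · rw [fJT_of_mem_setA h₁, fJT_of_mem_setA h₂] at heq
    have hdiff := blockA_diff_projPts (K := K) hσ W₁
    rw [heq, blockA_diff_projPts hσ] at hdiff
    exact le_antisymm (le_of_projPts_diff_subset h₁.2 hdiff.ge)
      (le_of_projPts_diff_subset h₂.2 hdiff.le)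
  · rw [fJT_of_mem_setA h₁, fJT_of_mem_setB h₂] at heq
    refine absurd (le_of_projPts_diff_subset h₁.2 (W := H) ?_) h₁.2
    rw [← blockA_diff_projPts hσ, heq, blockB_diff_projPts hσ h₂.2]
    exact Set.empty_subset _
  · rw [fJT_of_mem_setB h₁, fJT_of_mem_setA h₂] at heq
    refine absurd (le_of_projPts_diff_subset h₂.2 (W := H) ?_) h₂.2
    rw [← blockA_diff_projPts hσ, ← heq, blockB_diff_projPts hσ h₁.2]
    exact Set.empty_subset _
  · rw [fJT_of_mem_setB h₁, fJT_of_mem_setB h₂, blockB, blockB] at heq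
    rw [← hσ.involutive _ h₁.2, ← hσ.involutive _ h₂.2,
      le_antisymm (le_of_projPts_subset heq.le) (le_of_projPts_subset heq.ge)]

theorem surjOn_fJT (hH : finrank K H = 2 * e) (hσ : IsPolarity H σ) :
    Set.SurjOn (fJT σ e H) (setA e H ∪ setB e H) (blocksJT e σ H) := by
  rintro B (⟨W, hW, rfl⟩ | ⟨W, hW, hWH, rfl⟩)
  · exact ⟨W, Or.inl hW, fJT_of_mem_setA hW⟩
  · have hσW : σ W ∈ setB e H := ⟨by rw [hσ.finrank_eq _ hWH, hH, hW]; omega, hσ.le _ hWH⟩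
    exact ⟨σ W, Or.inr hσW, by rw [fJT_of_mem_setB hσW, blockB, hσ.involutive _ hWH]⟩

variable [FiniteDimensional K V] [Finite K]

theorem ne_and_twistedAdj_iff_of_mem_setA_setB (hV : finrank K V = 2 * e + 1)
    (hH : finrank K H = 2 * e) (hσ : IsPolarity H σ) {W₁ W₂ : Submodule K V}
    (h₁ : W₁ ∈ setA e H) (h₂ : W₂ ∈ setB e H) :
    W₁ ≠ W₂ ∧ twistedAdj e H W₁ W₂ ↔
      (blockA σ H W₁ ∩ blockB σ W₂).ncard = ∑ i ∈ Finset.range e, Nat.card K ^ i := by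
  rw [inter_blockA_blockB hσ _ h₂.2, ncard_projPts_coe_eq_geomSum_iff,
    finrank_polarity_sup_eq_iff_le hV hH hσ h₁ h₂, twistedAdj_iff_of_mem_setA_setB h₁ h₂,
    and_iff_right]
  rintro rfl
  exact notMem_setB_of_mem_setA h₁ h₂

theorem ne_and_twistedAdj_iff_ncard_inter (hV : finrank K V = 2 * e + 1)
    (hH : finrank K H = 2 * e) (he : 2 ≤ e) (hσ : IsPolarity H σ) {W₁ W₂ : Submodule K V}
    (h₁ : W₁ ∈ setA e H ∪ setB e H) (h₂ : W₂ ∈ setA e H ∪ setB e H) :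
    W₁ ≠ W₂ ∧ twistedAdj e H W₁ W₂ ↔
      (fJT σ e H W₁ ∩ fJT σ e H W₂).ncard = ∑ i ∈ Finset.range e, Nat.card K ^ i := by
  rcases h₁ with h₁ | h₁ <;> rcases h₂ with h₂ | h₂
  · rw [fJT_of_mem_setA h₁, fJT_of_mem_setA h₂, ncard_inter_blockA_blockA hV hH hσ h₁ h₂,
      ncard_projPts_coe_eq_geomSum_iff, twistedAdj_iff_of_mem_setA_setA h₁ h₂,
      and_iff_right_of_imp]
    rintro h rfl
    rw [inf_idem, h₁.1] at h
    omega
  · rw [fJT_of_mem_setA h₁, fJT_of_mem_setB h₂]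
    exact ne_and_twistedAdj_iff_of_mem_setA_setB hV hH hσ h₁ h₂
  · rw [fJT_of_mem_setB h₁, fJT_of_mem_setA h₂, ne_comm, twistedAdj_comm, Set.inter_comm]
    exact ne_and_twistedAdj_iff_of_mem_setA_setB hV hH hσ h₂ h₁
  · rw [fJT_of_mem_setB h₁, fJT_of_mem_setB h₂, inter_blockB_blockB hσ h₁.2 h₂.2,
      ncard_projPts_coe_eq_geomSum_iff, finrank_polarity_sup_eq_iff hH he hσ h₁ h₂,
      twistedAdj_iff_of_mem_setB_setB h₁ h₂, and_iff_right_of_imp]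
    rintro h rfl
    rw [inf_idem, h₁.1] at h
    omega

end Correspondence

theorem nonempty_iso_blockGraphJT {K V : Type*} [Field K] [AddCommGroup V] [Module K V]
    {q e : ℕ} {H : Submodule K V} {σ : Submodule K V → Submodule K V}
    (hbij : Set.BijOn (fJT σ e H) (setA e H ∪ setB e H) (blocksJT e σ H))
    (hadj : ∀ W₁ W₂ : {W : Submodule K V // W ∈ setA e H ∪ setB e H},
      (twistedGraph e H).Adj W₁ W₂ ↔
        (fJT σ e H W₁.1 ∩ fJT σ e H W₂.1).ncard = (q ^ e - 1) / (q - 1)) :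
    Nonempty (twistedGraph e H ≃g blockGraphJT q e σ H) := by
  refine ⟨⟨hbij.equiv _, fun {W₁ W₂} => ?_⟩⟩
  rw [blockGraphJT, SimpleGraph.fromRel_adj, (hbij.equiv _).injective.ne_iff,
    Set.inter_comm (hbij.equiv _ W₂).1, or_self]
  exact ⟨fun h => (hadj _ _).2 h.2, fun h => ⟨h.ne, (hadj _ _).1 h⟩⟩

theorem stmt0_general (q e : ℕ) (he : 2 ≤ e)
    (K V : Type*) [Field K] [Fintype K] (hK : Fintype.card K = q)
    [AddCommGroup V] [Module K V] [FiniteDimensional K V]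
    (hV : Module.finrank K V = 2 * e + 1)
    (H : Submodule K V) (hH : Module.finrank K ↥H = 2 * e)
    (σ : Submodule K V → Submodule K V)
    (hσle : ∀ W ≤ H, σ W ≤ H)
    (hσinv : ∀ W ≤ H, σ (σ W) = W)
    (hσinf : ∀ W₁ W₂ : Submodule K V, W₁ ≤ H → W₂ ≤ H → σ W₁ ⊓ σ W₂ = σ (W₁ ⊔ W₂))
    (hσrank : ∀ W ≤ H, Module.finrank K ↥(σ W) = 2 * e - Module.finrank K ↥W)
    :
    Set.BijOn (fJT σ e H) (setA e H ∪ setB e H) (blocksJT e σ H) ∧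
    (∀ W₁ W₂ : {W : Submodule K V // W ∈ setA e H ∪ setB e H},
      (twistedGraph e H).Adj W₁ W₂ ↔
        (fJT σ e H W₁.1 ∩ fJT σ e H W₂.1).ncard = (q ^ e - 1) / (q - 1)) ∧
    Nonempty (twistedGraph e H ≃g blockGraphJT q e σ H) := by
  have hσ : IsPolarity H σ := ⟨hσle, hσinv, hσinf, fun W hW => hH ▸ hσrank W hW⟩
  have hq : (q ^ e - 1) / (q - 1) = ∑ i ∈ Finset.range e, Nat.card K ^ i := by
    rw [Nat.card_eq_fintype_card, hK, Nat.geomSum_eq (hK ▸ Fintype.one_lt_card)]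
  have hbij : Set.BijOn (fJT σ e H) (setA e H ∪ setB e H) (blocksJT e σ H) :=
    ⟨mapsTo_fJT hH (by omega) hσ, injOn_fJT hσ, surjOn_fJT hH hσ⟩
  have hadj : ∀ W₁ W₂ : {W : Submodule K V // W ∈ setA e H ∪ setB e H},
      (twistedGraph e H).Adj W₁ W₂ ↔
        (fJT σ e H W₁.1 ∩ fJT σ e H W₂.1).ncard = (q ^ e - 1) / (q - 1) := fun W₁ W₂ => by
    rw [twistedGraph_adj, hq, ne_and_twistedAdj_iff_ncard_inter hV hH he hσ W₁.2 W₂.2]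
  exact ⟨hbij, hadj, nonempty_iso_blockGraphJT hbij hadj⟩

/-- The map `f` is a bijection from `𝒜 ∪ ℬ` onto the block set `𝒜' ∪ ℬ'` of
the Jungnickel–Tonchev design; two vertices are adjacent in the twisted Grassmann graph
`J̃_q(2e+1, e)` iff the corresponding blocks intersect in `(q^e - 1)/(q - 1)` points; and
consequently `J̃_q(2e+1, e)` is isomorphic to the block graph of the design. -/
theorem stmt0 (q e : ℕ) (hq : ∃ p n : ℕ, p.Prime ∧ 0 < n ∧ q = p ^ n) (he : 2 ≤ e)
    (K V : Type*) [Field K] [Fintype K] (hK : Fintype.card K = q)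
    [AddCommGroup V] [Module K V] [FiniteDimensional K V]
    (hV : Module.finrank K V = 2 * e + 1)
    (H : Submodule K V) (hH : Module.finrank K ↥H = 2 * e)
    (σ : Submodule K V → Submodule K V)
    (hσle : ∀ W ≤ H, σ W ≤ H)
    (hσinv : ∀ W ≤ H, σ (σ W) = W)
    (hσanti : ∀ W₁ W₂ : Submodule K V, W₁ ≤ H → W₂ ≤ H → W₁ ≤ W₂ → σ W₂ ≤ σ W₁)
    (hσinf : ∀ W₁ W₂ : Submodule K V, W₁ ≤ H → W₂ ≤ H → σ W₁ ⊓ σ W₂ = σ (W₁ ⊔ W₂))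
    (hσrank : ∀ W ≤ H, Module.finrank K ↥(σ W) = 2 * e - Module.finrank K ↥W)
    :
    Set.BijOn (fJT σ e H) (setA e H ∪ setB e H) (blocksJT e σ H) ∧
    (∀ W₁ W₂ : {W : Submodule K V // W ∈ setA e H ∪ setB e H},
      (twistedGraph e H).Adj W₁ W₂ ↔
        (fJT σ e H W₁.1 ∩ fJT σ e H W₂.1).ncard = (q ^ e - 1) / (q - 1)) ∧
    Nonempty (twistedGraph e H ≃g blockGraphJT q e σ H) :=
  stmt0_general q e he K V hK hV H hH σ hσle hσinv hσinf hσrank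
end

section
/- Let φ ∈ ΓL(V)_H and let φ' be the permutation of [V] defined by φ'(⟨x⟩) = σφσ(⟨x⟩) if ⟨x⟩ ∈ [H] and φ'(⟨x⟩) = φ(⟨x⟩) otherwise. Then for every (e+1)-dimensional subspace W of V with W ⊄ H, the image of the block [σ(W∩H) ∪ (W∖H)] under φ' equals [σ(φ(W)∩H) ∪ (φ(W)∖H)]; in particular φ' maps blocks in 𝒜' to blocks in 𝒜'. -/
/-- The image of a subspace `W` of `V` under a semilinear bijection `φ` of `V`
(an element of the general semilinear group `ΓL(V)`). -/
def semimap {K V : Type*} [Field K] [AddCommGroup V] [Module K V]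
    (τ : K ≃+* K) (φ : V ≃+ V)
    (hφ : ∀ (c : K) (x : V), φ (c • x) = τ c • φ x) (W : Submodule K V) :
    Submodule K V where
  carrier := φ '' (W : Set V)
  add_mem' := by
    rintro _ _ ⟨a, ha, rfl⟩ ⟨b, hb, rfl⟩
    exact ⟨a + b, W.add_mem ha hb, map_add φ a b⟩
  zero_mem' := ⟨0, W.zero_mem, map_zero φ⟩
  smul_mem' := by
    rintro c _ ⟨a, ha, rfl⟩
    exact ⟨τ.symm c • a, W.smul_mem _ ha, by rw [hφ, RingEquiv.apply_symm_apply]⟩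

open Classical in
/-- The permutation `φ'` of the projective points of `V` induced by `φ ∈ ΓL(V)_H`:
on points of `H` it acts as `σ φ σ`, elsewhere as `φ`. -/
noncomputable def phiMap {K V : Type*} [Field K] [AddCommGroup V] [Module K V]
    (σ : Submodule K V → Submodule K V) (H : Submodule K V)
    (τ : K ≃+* K) (φ : V ≃+ V)
    (hφ : ∀ (c : K) (x : V), φ (c • x) = τ c • φ x) (P : Submodule K V) : Submodule K V :=
  if P ≤ H then σ (semimap τ φ hφ (σ P)) else semimap τ φ hφ P

/-!
Points are the atoms of the lattice of subspaces, so the statement is lattice theory. The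
semilinear map `φ` induces a lattice automorphism `s` of `Submodule K V` fixing `H`, and since `σ`
is an order-reversing involution of the interval `Iic H`, the conjugate `σ s σ` is an automorphism
of `Iic H`. Hence `φ'` permutes the points, sending points of `H` to points of `H`. A point outside
`H` meets `H` trivially, so a point lies in `σ(W ∩ H) ∪ (W \ H)` iff it lies in `σ(W ⊓ H)` (points
of `H`) or in `W` (other points). For a point `P ≤ H`, `P ≤ σ(W ⊓ H)` iff
`σ s σ P ≤ σ s σ (σ (W ⊓ H)) = σ (s W ⊓ H)`; for any other point, `P ≤ W` iff `s P ≤ s W`.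
-/

section Polarity

variable {α : Type*} [Lattice α]

structure IsPolarityOn (σ : α → α) (H : α) : Prop where
  map_le : ∀ W ≤ H, σ W ≤ H
  involutive : ∀ W ≤ H, σ (σ W) = W
  antitone : ∀ W₁ W₂, W₁ ≤ H → W₂ ≤ H → W₁ ≤ W₂ → σ W₂ ≤ σ W₁

variable {σ : α → α} {H : α}

theorem IsPolarityOn.le_iff_le (hσ : IsPolarityOn σ H) {A B : α} (hA : A ≤ H) (hB : B ≤ H) :
    σ A ≤ σ B ↔ B ≤ A := by
  refine ⟨fun h => ?_, hσ.antitone B A hB hA⟩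
  rw [← hσ.involutive A hA, ← hσ.involutive B hB]
  exact hσ.antitone _ _ (hσ.map_le A hA) (hσ.map_le B hB) h

def IsPolarityOn.orderIso (hσ : IsPolarityOn σ H) : Set.Iic H ≃o (Set.Iic H)ᵒᵈ where
  toFun P := OrderDual.toDual ⟨σ P, hσ.map_le P P.2⟩
  invFun P := ⟨σ (OrderDual.ofDual P : Set.Iic H), hσ.map_le _ (OrderDual.ofDual P).2⟩
  left_inv P := Subtype.ext (hσ.involutive P P.2)
  right_inv P := Subtype.ext (hσ.involutive _ (OrderDual.ofDual P).2)
  map_rel_iff' {P Q} := (hσ.le_iff_le Q.2 P.2).trans Subtype.coe_le_coe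

def OrderIso.restrictIic (s : α ≃o α) (hsH : s H = H) : Set.Iic H ≃o Set.Iic H :=
  (s.Iic H).trans (OrderIso.setCongr _ _ (by rw [hsH]))

def IsPolarityOn.conj (hσ : IsPolarityOn σ H) (s : α ≃o α) (hsH : s H = H) :
    Set.Iic H ≃o Set.Iic H :=
  hσ.orderIso.trans ((s.restrictIic hsH).dual.trans hσ.orderIso.symm)

theorem Set.Iic.isAtom_coe_iff [OrderBot α] {P : Set.Iic H} : IsAtom (P : α) ↔ IsAtom P :=
  ⟨fun h => h.Iic P.2, IsAtom.of_isAtom_coe_Iic⟩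

end Polarity

section Semilinear

variable {K V : Type*} [Field K] [AddCommGroup V] [Module K V] {τ : K ≃+* K} {φ : V ≃+ V}

theorem AddEquiv.symm_map_smul_of_semilinear (hφ : ∀ (c : K) (x : V), φ (c • x) = τ c • φ x)
    (c : K) (x : V) : φ.symm (c • x) = τ.symm c • φ.symm x :=
  φ.injective (by rw [hφ, RingEquiv.apply_symm_apply, φ.apply_symm_apply, φ.apply_symm_apply])

def semimapOrderIso (hφ : ∀ (c : K) (x : V), φ (c • x) = τ c • φ x) :
    Submodule K V ≃o Submodule K V where
  toFun := semimap τ φ hφ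
  invFun := semimap τ.symm φ.symm (φ.symm_map_smul_of_semilinear hφ)
  left_inv _ := SetLike.coe_injective (φ.toEquiv.symm_image_image _)
  right_inv _ := SetLike.coe_injective (φ.toEquiv.image_symm_image _)
  map_rel_iff' := SetLike.coe_subset_coe.symm.trans
    ((Set.image_subset_image_iff φ.injective).trans SetLike.coe_subset_coe)

theorem semimapOrderIso_apply (hφ : ∀ (c : K) (x : V), φ (c • x) = τ c • φ x)
    (W : Submodule K V) : semimapOrderIso hφ W = semimap τ φ hφ W := rfl

theorem finrank_semimap (hφ : ∀ (c : K) (x : V), φ (c • x) = τ c • φ x) (W : Submodule K V) :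
    Module.finrank K (semimap τ φ hφ W) = Module.finrank K W :=
  congrArg Cardinal.toNat <| Eq.symm <| rank_eq_of_equiv_equiv (M := W) (M₁ := semimap τ φ hφ W)
    τ (φ.addSubgroupMap W.toAddSubgroup) τ.bijective fun c x => Subtype.ext (hφ c x)

end Semilinear

section Blocks

variable {K V : Type*} [Field K] [AddCommGroup V] [Module K V]

open Classical in
theorem mem_projPts_union_diff {A H W P : Submodule K V} (hAH : A ≤ H) :
    P ∈ projPts K ((A : Set V) ∪ ((W : Set V) \ H)) ↔
      IsAtom P ∧ if P ≤ H then P ≤ A else P ≤ W := by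
  rw [projPts, Set.mem_ofPred_eq, ← Submodule.isAtom_iff_finrank_eq_one]
  refine and_congr_right fun hP => ?_
  split_ifs with hPH
  · exact ⟨fun h x hx => (h hx).resolve_right fun hx' => hx'.2 (hPH hx),
      fun h x hx => .inl (h hx)⟩
  · have hPH' : Disjoint P H := hP.not_le_iff_disjoint.mp hPH
    constructor
    · intro h
      obtain ⟨x, hxP, hxH⟩ := SetLike.not_le_iff_exists.mp hPH
      have hxW : x ∈ W := ((h hxP).resolve_left fun hxA => hxH (hAH hxA)).1
      refine hP.not_disjoint_iff_le.mp fun hPW => hxH ?_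
      rw [Submodule.disjoint_def.mp hPW x hxP hxW]
      exact H.zero_mem
    · intro hPW x hxP
      by_cases hxH : x ∈ H
      · rw [Submodule.disjoint_def.mp hPH' x hxP hxH]
        exact .inl A.zero_mem
      · exact .inr ⟨hPW hxP, hxH⟩

variable {σ : Submodule K V → Submodule K V} {H : Submodule K V}

open Classical in
theorem mem_blockA_iff {W P : Submodule K V} (hσW : σ (W ⊓ H) ≤ H) :
    P ∈ blockA σ H W ↔ IsAtom P ∧ if P ≤ H then P ≤ σ (W ⊓ H) else P ≤ W :=
  mem_projPts_union_diff hσW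

theorem isAtom_of_mem_blockA {W P : Submodule K V} (hP : P ∈ blockA σ H W) : IsAtom P :=
  Submodule.isAtom_iff_finrank_eq_one.mpr hP.1

variable {τ : K ≃+* K} {φ : V ≃+ V} {hφ : ∀ (c : K) (x : V), φ (c • x) = τ c • φ x}

theorem phiMap_of_le {P : Submodule K V} (hP : P ≤ H) :
    phiMap σ H τ φ hφ P = σ (semimap τ φ hφ (σ P)) := if_pos hP

theorem phiMap_of_not_le {P : Submodule K V} (hP : ¬ P ≤ H) :
    phiMap σ H τ φ hφ P = semimap τ φ hφ P := if_neg hP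

theorem semimap_le_iff_of_semimap_eq (hφH : semimap τ φ hφ H = H) {P : Submodule K V} :
    semimap τ φ hφ P ≤ H ↔ P ≤ H := by
  rw [← (semimapOrderIso hφ).le_iff_le (x := P) (y := H), semimapOrderIso_apply,
    semimapOrderIso_apply, hφH]

theorem phiMap_mem_blockA_iff (hσ : IsPolarityOn σ H) (hφH : semimap τ φ hφ H = H)
    (W P : Submodule K V) :
    phiMap σ H τ φ hφ P ∈ blockA σ H (semimap τ φ hφ W) ↔ P ∈ blockA σ H W := by
  set s := semimapOrderIso hφ
  rw [mem_blockA_iff (hσ.map_le _ inf_le_right), mem_blockA_iff (hσ.map_le _ inf_le_right)]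
  by_cases hPH : P ≤ H
  · set T := hσ.conj s hφH
    have hTP : phiMap σ H τ φ hφ P = T ⟨P, hPH⟩ := phiMap_of_le hPH
    have hTW : σ (semimap τ φ hφ W ⊓ H) = T ⟨σ (W ⊓ H), hσ.map_le _ inf_le_right⟩ := by
      change _ = σ (s (σ (σ (W ⊓ H))))
      rw [hσ.involutive _ inf_le_right, s.map_inf, semimapOrderIso_apply,
        semimapOrderIso_apply, hφH]
    rw [hTP, hTW, if_pos (show (T ⟨P, hPH⟩ : Submodule K V) ≤ H from (T _).2), if_pos hPH,
      Subtype.coe_le_coe, T.le_iff_le, Set.Iic.isAtom_coe_iff, T.isAtom_iff]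
    exact and_congr Set.Iic.isAtom_coe_iff.symm Subtype.mk_le_mk
  · rw [phiMap_of_not_le hPH, if_neg ((semimap_le_iff_of_semimap_eq hφH).not.mpr hPH),
      if_neg hPH]
    exact and_congr (s.isAtom_iff P) s.le_iff_le

theorem exists_phiMap_eq (hσ : IsPolarityOn σ H) (hφH : semimap τ φ hφ H = H)
    {Q : Submodule K V} (hQ : IsAtom Q) : ∃ P, IsAtom P ∧ phiMap σ H τ φ hφ P = Q := by
  set s := semimapOrderIso hφ
  by_cases hQH : Q ≤ H
  · set T := hσ.conj s hφH
    set P := T.symm ⟨Q, hQH⟩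
    refine ⟨P, Set.Iic.isAtom_coe_iff.mpr ((T.symm.isAtom_iff _).mpr (hQ.Iic hQH)), ?_⟩
    rw [phiMap_of_le P.2]
    exact congrArg Subtype.val (T.apply_symm_apply _)
  · have hsQ : ¬ s.symm Q ≤ H := by
      rwa [← semimap_le_iff_of_semimap_eq hφH, ← semimapOrderIso_apply, s.apply_symm_apply]
    refine ⟨s.symm Q, (s.symm.isAtom_iff Q).mpr hQ, ?_⟩
    rw [phiMap_of_not_le hsQ]
    exact s.apply_symm_apply Q

theorem image_phiMap_blockA (hσ : IsPolarityOn σ H) (hφH : semimap τ φ hφ H = H)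
    (W : Submodule K V) :
    phiMap σ H τ φ hφ '' blockA σ H W = blockA σ H (semimap τ φ hφ W) := by
  ext Q
  constructor
  · rintro ⟨P, hP, rfl⟩
    exact (phiMap_mem_blockA_iff hσ hφH W P).mpr hP
  · intro hQ
    obtain ⟨P, hP, rfl⟩ := exists_phiMap_eq hσ hφH (isAtom_of_mem_blockA hQ)
    exact ⟨P, (phiMap_mem_blockA_iff hσ hφH W P).mp hQ, rfl⟩

theorem semimap_mem_setA {e : ℕ} (hφH : semimap τ φ hφ H = H) {W : Submodule K V}
    (hW : W ∈ setA e H) : semimap τ φ hφ W ∈ setA e H :=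
  ⟨(finrank_semimap hφ W).trans hW.1, (semimap_le_iff_of_semimap_eq hφH).not.mpr hW.2⟩

end Blocks

theorem stmt7_general (e : ℕ) (K V : Type*) [Field K] [AddCommGroup V] [Module K V]
    (H : Submodule K V) (σ : Submodule K V → Submodule K V)
    (hσle : ∀ W ≤ H, σ W ≤ H)
    (hσinv : ∀ W ≤ H, σ (σ W) = W)
    (hσanti : ∀ W₁ W₂ : Submodule K V, W₁ ≤ H → W₂ ≤ H → W₁ ≤ W₂ → σ W₂ ≤ σ W₁)
    (τ : K ≃+* K) (φ : V ≃+ V) (hφ : ∀ (c : K) (x : V), φ (c • x) = τ c • φ x)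
    (hφH : semimap τ φ hφ H = H) :
    (∀ W ∈ setA e H,
      phiMap σ H τ φ hφ '' blockA σ H W = blockA σ H (semimap τ φ hφ W)) ∧
    (∀ B ∈ blockA σ H '' setA e H,
      phiMap σ H τ φ hφ '' B ∈ blockA σ H '' setA e H) := by
  have hσ : IsPolarityOn σ H := ⟨hσle, hσinv, hσanti⟩
  refine ⟨fun W _ => image_phiMap_blockA hσ hφH W, ?_⟩
  rintro B ⟨W, hW, rfl⟩
  exact ⟨semimap τ φ hφ W, semimap_mem_setA hφH hW, (image_phiMap_blockA hσ hφH W).symm⟩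

/-- For `φ ∈ ΓL(V)_H`, the induced permutation `φ'` of the projective
points (acting as `σφσ` on points of `H` and as `φ` elsewhere) maps the block
`[σ(W ∩ H) ∪ (W \ H)]` to `[σ(φ(W) ∩ H) ∪ (φ(W) \ H)]` for every `W ∈ 𝒜`; in particular
`φ'` maps blocks in `𝒜'` to blocks in `𝒜'`. -/
theorem stmt7 (q e : ℕ) (hq : ∃ p n : ℕ, p.Prime ∧ 0 < n ∧ q = p ^ n) (he : 1 ≤ e)
    (K V : Type*) [Field K] [Fintype K] (hK : Fintype.card K = q)
    [AddCommGroup V] [Module K V] [FiniteDimensional K V]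
    (hV : Module.finrank K V = 2 * e + 1)
    (H : Submodule K V) (hH : Module.finrank K ↥H = 2 * e)
    (σ : Submodule K V → Submodule K V)
    (hσle : ∀ W ≤ H, σ W ≤ H)
    (hσinv : ∀ W ≤ H, σ (σ W) = W)
    (hσanti : ∀ W₁ W₂ : Submodule K V, W₁ ≤ H → W₂ ≤ H → W₁ ≤ W₂ → σ W₂ ≤ σ W₁)
    (hσinf : ∀ W₁ W₂ : Submodule K V, W₁ ≤ H → W₂ ≤ H → σ W₁ ⊓ σ W₂ = σ (W₁ ⊔ W₂))
    (hσrank : ∀ W ≤ H, Module.finrank K ↥(σ W) = 2 * e - Module.finrank K ↥W)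
    (τ : K ≃+* K) (φ : V ≃+ V) (hφ : ∀ (c : K) (x : V), φ (c • x) = τ c • φ x)
    (hφH : semimap τ φ hφ H = H) :
    (∀ W ∈ setA e H,
      phiMap σ H τ φ hφ '' blockA σ H W = blockA σ H (semimap τ φ hφ W)) ∧
    (∀ B ∈ blockA σ H '' setA e H,
      phiMap σ H τ φ hφ '' B ∈ blockA σ H '' setA e H) :=
  stmt7_general e K V H σ hσle hσinv hσanti τ φ hφ hφH
end

section
/- For each φ ∈ ΓL(V)_H, the permutation φ' of [V] defined by φ'(⟨x⟩) = σφσ(⟨x⟩) if ⟨x⟩ ∈ [H] and φ'(⟨x⟩) = φ(⟨x⟩) otherwise is an automorphism of the Jungnickel–Tonchev design ([V], 𝒜' ∪ ℬ'), i.e., φ' maps every block of the design to a block of the design. -/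
section AuxSemimap
variable {K V : Type*} [Field K] [AddCommGroup V] [Module K V]
variable (τ : K ≃+* K) (φ : V ≃+ V) (hφ : ∀ (c : K) (x : V), φ (c • x) = τ c • φ x)

theorem mem_semimap {W : Submodule K V} {x : V} :
    x ∈ semimap τ φ hφ W ↔ φ.symm x ∈ W := by
  constructor
  · rintro ⟨a, ha, rfl⟩; simpa using ha
  · intro h; exact ⟨φ.symm x, h, φ.apply_symm_apply x⟩

include hφ in
theorem hφsymm : ∀ (c : K) (x : V), φ.symm (c • x) = τ.symm c • φ.symm x := by
  intro c x
  apply φ.injective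
  rw [φ.apply_symm_apply, hφ, RingEquiv.apply_symm_apply, φ.apply_symm_apply]

theorem semimap_symm_semimap (W : Submodule K V) :
    semimap τ.symm φ.symm (hφsymm τ φ hφ) (semimap τ φ hφ W) = W := by
  ext x; simp [mem_semimap]

theorem semimap_semimap_symm (W : Submodule K V) :
    semimap τ φ hφ (semimap τ.symm φ.symm (hφsymm τ φ hφ) W) = W := by
  ext x; simp [mem_semimap]

theorem semimap_mono {W₁ W₂ : Submodule K V} (h : W₁ ≤ W₂) :
    semimap τ φ hφ W₁ ≤ semimap τ φ hφ W₂ := by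
  intro x hx
  rw [mem_semimap] at hx ⊢
  exact h hx

theorem semimap_inf (W₁ W₂ : Submodule K V) :
    semimap τ φ hφ (W₁ ⊓ W₂) = semimap τ φ hφ W₁ ⊓ semimap τ φ hφ W₂ := by
  ext x; simp [mem_semimap]

noncomputable def semimapEquiv (W : Submodule K V) : W ≃+ semimap τ φ hφ W where
  toFun x := ⟨φ x, ⟨x, x.2, rfl⟩⟩
  invFun y := ⟨φ.symm y, (mem_semimap τ φ hφ).1 y.2⟩
  left_inv x := by ext; simp
  right_inv y := by ext; simp
  map_add' x y := by ext; simp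

theorem semimap_finrank (W : Submodule K V) :
    Module.finrank K (semimap τ φ hφ W) = Module.finrank K W := by
  have h : Module.rank K W = Module.rank K (semimap τ φ hφ W) := by
    refine rank_eq_of_equiv_equiv (⟨τ, map_zero τ⟩ : ZeroHom K K) (semimapEquiv τ φ hφ W)
      (EquivLike.bijective τ) ?_
    intro r m
    ext
    simp [semimapEquiv, hφ]
  simp [Module.finrank, h]

end AuxSemimap

section AuxGeo
variable {K V : Type*} [Field K] [AddCommGroup V] [Module K V] [FiniteDimensional K V]

theorem span_eq_of_rank_one {P : Submodule K V} (h1 : Module.finrank K P = 1)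
    {x : V} (hx : x ∈ P) (hx0 : x ≠ 0) : Submodule.span K {x} = P := by
  refine Submodule.eq_of_le_of_finrank_le ((Submodule.span_le).2 (by simpa using hx)) ?_
  rw [h1, finrank_span_singleton hx0]

theorem mem_eq_zero_of_rank_one {P H : Submodule K V} (h1 : Module.finrank K P = 1)
    (hPH : ¬ P ≤ H) {x : V} (hx : x ∈ P) (hxH : x ∈ H) : x = 0 := by
  by_contra h0
  exact hPH ((span_eq_of_rank_one h1 hx h0) ▸ (Submodule.span_le).2 (by simpa using hxH))

theorem subset_block_iff (σ : Submodule K V → Submodule K V) (H W : Submodule K V)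
    (hσH : σ (W ⊓ H) ≤ H) {P : Submodule K V} (h1 : Module.finrank K P = 1) :
    (P : Set V) ⊆ (σ (W ⊓ H) : Set V) ∪ ((W : Set V) \ (H : Set V)) ↔
      P ≤ σ (W ⊓ H) ∨ (P ≤ W ∧ ¬ P ≤ H) := by
  constructor
  · intro hsub
    by_cases hPs : P ≤ σ (W ⊓ H)
    · exact Or.inl hPs
    right
    obtain ⟨x, hxP, hxs⟩ := SetLike.not_le_iff_exists.1 hPs
    have hxWH : x ∈ W ∧ x ∉ H := by
      rcases hsub hxP with h | h
      · exact absurd h hxs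
      · exact h
    have hPnH : ¬ P ≤ H := fun h => hxWH.2 (h hxP)
    refine ⟨?_, hPnH⟩
    intro y hyP
    rcases hsub hyP with h | h
    · have : y = 0 := mem_eq_zero_of_rank_one h1 hPnH hyP (hσH h)
      simp [this]
    · exact h.1
  · rintro (h | ⟨hW, hH⟩)
    · intro x hx; exact Or.inl (h hx)
    · intro x hx
      by_cases hxH : x ∈ H
      · have : x = 0 := mem_eq_zero_of_rank_one h1 hH hx hxH
        exact Or.inl (this ▸ (σ (W ⊓ H)).zero_mem)
      · exact Or.inr ⟨hW hx, hxH⟩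

end AuxGeo

/-- For each `φ ∈ ΓL(V)_H`, the induced map `φ'` (acting as `σφσ` on the
points of `H` and as `φ` elsewhere) is a permutation of the point set `[V]` and an
automorphism of the Jungnickel–Tonchev design `([V], 𝒜' ∪ ℬ')`: it maps every block of the
design to a block of the design. -/
theorem stmt9 (q e : ℕ) (hq : ∃ p n : ℕ, p.Prime ∧ 0 < n ∧ q = p ^ n) (he : 2 ≤ e)
    (K V : Type*) [Field K] [Fintype K] (hK : Fintype.card K = q)
    [AddCommGroup V] [Module K V] [FiniteDimensional K V]
    (hV : Module.finrank K V = 2 * e + 1)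
    (H : Submodule K V) (hH : Module.finrank K ↥H = 2 * e)
    (σ : Submodule K V → Submodule K V)
    (hσle : ∀ W ≤ H, σ W ≤ H)
    (hσinv : ∀ W ≤ H, σ (σ W) = W)
    (hσanti : ∀ W₁ W₂ : Submodule K V, W₁ ≤ H → W₂ ≤ H → W₁ ≤ W₂ → σ W₂ ≤ σ W₁)
    (hσinf : ∀ W₁ W₂ : Submodule K V, W₁ ≤ H → W₂ ≤ H → σ W₁ ⊓ σ W₂ = σ (W₁ ⊔ W₂))
    (hσrank : ∀ W ≤ H, Module.finrank K ↥(σ W) = 2 * e - Module.finrank K ↥W)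
    (τ : K ≃+* K) (φ : V ≃+ V) (hφ : ∀ (c : K) (x : V), φ (c • x) = τ c • φ x)
    (hφH : semimap τ φ hφ H = H) :
    Set.BijOn (phiMap σ H τ φ hφ) {P : Submodule K V | Module.finrank K P = 1}
      {P : Submodule K V | Module.finrank K P = 1} ∧
    ∀ B ∈ blocksJT e σ H, phiMap σ H τ φ hφ '' B ∈ blocksJT e σ H := by
  have hφ2 := hφsymm τ φ hφ
  have hGG : ∀ Wx : Submodule K V, semimap τ.symm φ.symm hφ2 (semimap τ φ hφ Wx) = Wx :=
    semimap_symm_semimap τ φ hφ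
  have hGG' : ∀ Wx : Submodule K V, semimap τ φ hφ (semimap τ.symm φ.symm hφ2 Wx) = Wx :=
    semimap_semimap_symm τ φ hφ
  have hφH2 : semimap τ.symm φ.symm hφ2 H = H := by
    have h := congrArg (semimap τ.symm φ.symm hφ2) hφH
    rw [hGG] at h
    exact h.symm
  have hleH : ∀ Wx : Submodule K V, (semimap τ φ hφ Wx ≤ H ↔ Wx ≤ H) := by
    intro Wx
    constructor
    · intro h
      have h2 := semimap_mono τ.symm φ.symm hφ2 h
      rwa [hGG, hφH2] at h2
    · intro h
      have h2 := semimap_mono τ φ hφ h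
      rwa [hφH] at h2
  have hleH2 : ∀ Wx : Submodule K V, (semimap τ.symm φ.symm hφ2 Wx ≤ H ↔ Wx ≤ H) := by
    intro Wx
    constructor
    · intro h
      have h2 := semimap_mono τ φ hφ h
      rwa [hGG', hφH] at h2
    · intro h
      have h2 := semimap_mono τ.symm φ.symm hφ2 h
      rwa [hφH2] at h2
  have hifpos : ∀ P : Submodule K V, P ≤ H →
      phiMap σ H τ φ hφ P = σ (semimap τ φ hφ (σ P)) := by
    intro P h; unfold phiMap; rw [if_pos h]
  have hifneg : ∀ P : Submodule K V, ¬ P ≤ H →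
      phiMap σ H τ φ hφ P = semimap τ φ hφ P := by
    intro P h; unfold phiMap; rw [if_neg h]
  have hifpos2 : ∀ P : Submodule K V, P ≤ H →
      phiMap σ H τ.symm φ.symm hφ2 P = σ (semimap τ.symm φ.symm hφ2 (σ P)) := by
    intro P h; unfold phiMap; rw [if_pos h]
  have hifneg2 : ∀ P : Submodule K V, ¬ P ≤ H →
      phiMap σ H τ.symm φ.symm hφ2 P = semimap τ.symm φ.symm hφ2 P := by
    intro P h; unfold phiMap; rw [if_neg h]
  have hinv1 : ∀ P : Submodule K V,
      phiMap σ H τ.symm φ.symm hφ2 (phiMap σ H τ φ hφ P) = P := by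
    intro P
    by_cases h : P ≤ H
    · have h1 : σ P ≤ H := hσle P h
      have h2 : semimap τ φ hφ (σ P) ≤ H := (hleH _).2 h1
      have h3 : σ (semimap τ φ hφ (σ P)) ≤ H := hσle _ h2
      rw [hifpos P h, hifpos2 _ h3, hσinv _ h2, hGG, hσinv P h]
    · have h1 : ¬ semimap τ φ hφ P ≤ H := fun hh => h ((hleH P).1 hh)
      rw [hifneg P h, hifneg2 _ h1, hGG]
  have hinv2 : ∀ P : Submodule K V,
      phiMap σ H τ φ hφ (phiMap σ H τ.symm φ.symm hφ2 P) = P := by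
    intro P
    by_cases h : P ≤ H
    · have h1 : σ P ≤ H := hσle P h
      have h2 : semimap τ.symm φ.symm hφ2 (σ P) ≤ H := (hleH2 _).2 h1
      have h3 : σ (semimap τ.symm φ.symm hφ2 (σ P)) ≤ H := hσle _ h2
      rw [hifpos2 P h, hifpos _ h3, hσinv _ h2, hGG', hσinv P h]
    · have h1 : ¬ semimap τ.symm φ.symm hφ2 P ≤ H := fun hh => h ((hleH2 P).1 hh)
      rw [hifneg2 P h, hifneg _ h1, hGG']
  have hrk1 : ∀ P : Submodule K V, Module.finrank K P = 1 →
      Module.finrank K (phiMap σ H τ φ hφ P) = 1 := by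
    intro P hP
    by_cases h : P ≤ H
    · have h1 : σ P ≤ H := hσle P h
      have h2 : semimap τ φ hφ (σ P) ≤ H := (hleH _).2 h1
      rw [hifpos P h, hσrank _ h2, semimap_finrank τ φ hφ (σ P), hσrank P h, hP]
      omega
    · rw [hifneg P h, semimap_finrank τ φ hφ P]; exact hP
  have hrk2 : ∀ P : Submodule K V, Module.finrank K P = 1 →
      Module.finrank K (phiMap σ H τ.symm φ.symm hφ2 P) = 1 := by
    intro P hP
    by_cases h : P ≤ H
    · have h1 : σ P ≤ H := hσle P h
      have h2 : semimap τ.symm φ.symm hφ2 (σ P) ≤ H := (hleH2 _).2 h1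
      rw [hifpos2 P h, hσrank _ h2, semimap_finrank τ.symm φ.symm hφ2 (σ P), hσrank P h, hP]
      omega
    · rw [hifneg2 P h, semimap_finrank τ.symm φ.symm hφ2 P]; exact hP
  constructor
  · exact Set.InvOn.bijOn ⟨fun P _ => hinv1 P, fun P _ => hinv2 P⟩
      (fun P hP => hrk1 P hP) (fun P hP => hrk2 P hP)
  · intro B hB
    simp only [blocksJT, Set.mem_union, Set.mem_image, Set.mem_setOf_eq, setA] at hB ⊢
    rcases hB with ⟨W, ⟨hWr, hWH⟩, rfl⟩ | ⟨W, hWr, hWle, rfl⟩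
    · -- A'-block
      refine Or.inl ⟨semimap τ φ hφ W, ⟨(semimap_finrank τ φ hφ W).trans hWr,
        fun h => hWH ((hleH W).1 h)⟩, ?_⟩
      have hinfW : semimap τ φ hφ (W ⊓ H) = semimap τ φ hφ W ⊓ H := by
        rw [semimap_inf, hφH]
      have hWHle : W ⊓ H ≤ H := inf_le_right
      have hσWH : σ (W ⊓ H) ≤ H := hσle _ hWHle
      have hσWH' : σ (semimap τ φ hφ W ⊓ H) ≤ H := hσle _ inf_le_right
      have hsWHle : semimap τ φ hφ (W ⊓ H) ≤ H := (hleH _).2 hWHle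
      ext P'
      simp only [blockA, projPts, Set.mem_setOf_eq, Set.mem_image]
      constructor
      · rintro ⟨hP'1, hP'sub⟩
        refine ⟨phiMap σ H τ.symm φ.symm hφ2 P', ⟨hrk2 P' hP'1, ?_⟩, hinv2 P'⟩
        rcases (subset_block_iff σ H (semimap τ φ hφ W) hσWH' hP'1).1 hP'sub with
          hc | ⟨hPW, hPnH⟩
        · rw [← hinfW] at hc
          have hP'H : P' ≤ H := hc.trans (hσle _ hsWHle)
          refine (subset_block_iff σ H W hσWH (hrk2 P' hP'1)).2 (Or.inl ?_)
          rw [hifpos2 P' hP'H]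
          have f1 : σ (σ (semimap τ φ hφ (W ⊓ H))) ≤ σ P' :=
            hσanti P' _ hP'H (hσle _ hsWHle) hc
          rw [hσinv _ hsWHle] at f1
          have f3 : W ⊓ H ≤ semimap τ.symm φ.symm hφ2 (σ P') := by
            have h5 := semimap_mono τ.symm φ.symm hφ2 f1
            rwa [hGG] at h5
          exact hσanti _ _ hWHle ((hleH2 _).2 (hσle P' hP'H)) f3
        · refine (subset_block_iff σ H W hσWH (hrk2 P' hP'1)).2 (Or.inr ⟨?_, ?_⟩)
          · rw [hifneg2 P' hPnH]
            have h5 := semimap_mono τ.symm φ.symm hφ2 hPW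
            rwa [hGG] at h5
          · rw [hifneg2 P' hPnH]
            exact fun h => hPnH ((hleH2 P').1 h)
      · rintro ⟨P, ⟨hP1, hPsub⟩, rfl⟩
        refine ⟨hrk1 P hP1, ?_⟩
        rcases (subset_block_iff σ H W hσWH hP1).1 hPsub with hc | ⟨hPW, hPnH⟩
        · have hPH : P ≤ H := hc.trans hσWH
          refine (subset_block_iff σ H (semimap τ φ hφ W) hσWH' (hrk1 P hP1)).2 (Or.inl ?_)
          rw [hifpos P hPH, ← hinfW]
          have e1 : σ (σ (W ⊓ H)) ≤ σ P := hσanti P _ hPH hσWH hc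
          rw [hσinv _ hWHle] at e1
          have e3 := semimap_mono τ φ hφ e1
          exact hσanti _ _ hsWHle ((hleH _).2 (hσle P hPH)) e3
        · refine (subset_block_iff σ H (semimap τ φ hφ W) hσWH' (hrk1 P hP1)).2
            (Or.inr ⟨?_, ?_⟩)
          · rw [hifneg P hPnH]; exact semimap_mono τ φ hφ hPW
          · rw [hifneg P hPnH]; exact fun h => hPnH ((hleH P).1 h)
    · -- B'-block
      have hσW : σ W ≤ H := hσle W hWle
      have hsσW : semimap τ φ hφ (σ W) ≤ H := (hleH _).2 hσW
      have hW' : σ (semimap τ φ hφ (σ W)) ≤ H := hσle _ hsσW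
      refine Or.inr ⟨σ (semimap τ φ hφ (σ W)), ?_, hW', ?_⟩
      · rw [hσrank _ hsσW, semimap_finrank τ φ hφ (σ W), hσrank W hWle, hWr]
        omega
      · ext P'
        simp only [Set.mem_image, projPts, Set.mem_setOf_eq]
        constructor
        · rintro ⟨P, ⟨hP1, hPsub⟩, rfl⟩
          have hPle : P ≤ W := fun x hx => hPsub hx
          have hPH : P ≤ H := hPle.trans hWle
          refine ⟨hrk1 P hP1, ?_⟩
          rw [hifpos P hPH]
          have c1 : σ W ≤ σ P := hσanti P W hPH hWle hPle
          have c2 := semimap_mono τ φ hφ c1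
          exact SetLike.coe_subset_coe.2
            (hσanti _ _ hsσW ((hleH _).2 (hσle P hPH)) c2)
        · rintro ⟨hP'1, hP'sub⟩
          have hP'le : P' ≤ σ (semimap τ φ hφ (σ W)) := fun x hx => hP'sub hx
          have hP'H : P' ≤ H := hP'le.trans hW'
          refine ⟨phiMap σ H τ.symm φ.symm hφ2 P', ⟨hrk2 P' hP'1, ?_⟩, hinv2 P'⟩
          rw [hifpos2 P' hP'H]
          have d1 : σ (σ (semimap τ φ hφ (σ W))) ≤ σ P' := hσanti P' _ hP'H hW' hP'le
          rw [hσinv _ hsσW] at d1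
          have d3 : σ W ≤ semimap τ.symm φ.symm hφ2 (σ P') := by
            have h5 := semimap_mono τ.symm φ.symm hφ2 d1
            rwa [hGG] at h5
          have d4 := hσanti _ _ hσW ((hleH2 _).2 (hσle P' hP'H)) d3
          rw [hσinv W hWle] at d4
          exact SetLike.coe_subset_coe.2 d4
end

section
/- Let α be an automorphism of the Jungnickel–Tonchev design ([V], 𝒜' ∪ ℬ'), inducing a permutation of the block set 𝒜' ∪ ℬ' (denoted also α), and let f : 𝒜 ∪ ℬ → 𝒜' ∪ ℬ' be the bijection sending W ∈ 𝒜 to [σ(W∩H) ∪ (W∖H)] and W ∈ ℬ to [σ(W)]. Then f⁻¹ ∘ α ∘ f is an automorphism of the twisted Grassmann graph J̃_q(2e+1,e). -/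
/-- The projective points of `V`: the 1-dimensional subspaces. -/
abbrev Pt (K V : Type*) [Field K] [AddCommGroup V] [Module K V] :=
  {P : Submodule K V // Module.finrank K P = 1}

/-- The set of projective points contained in a subset `S` of `V`. -/
def projPt {K V : Type*} [Field K] [AddCommGroup V] [Module K V]
    (S : Set V) : Set (Pt K V) :=
  {P | ((P : Submodule K V) : Set V) ⊆ S}

/-- The block `[σ(W ∩ H) ∪ (W \ H)]` associated to `W ∈ 𝒜`, as a set of projective points. -/
def blockAPt {K V : Type*} [Field K] [AddCommGroup V] [Module K V]
    (σ : Submodule K V → Submodule K V) (H W : Submodule K V) : Set (Pt K V) :=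
  projPt ((σ (W ⊓ H) : Set V) ∪ ((W : Set V) \ (H : Set V)))

/-- The block `[σ(W)]` associated to `W ∈ ℬ`, as a set of projective points. -/
def blockBPt {K V : Type*} [Field K] [AddCommGroup V] [Module K V]
    (σ : Submodule K V → Submodule K V) (W : Submodule K V) : Set (Pt K V) :=
  projPt (σ W : Set V)

/-- The block set `𝒜' ∪ ℬ'` of the Jungnickel–Tonchev design, as sets of projective
points. -/
def blocksJTPt {K V : Type*} [Field K] [AddCommGroup V] [Module K V]
    (e : ℕ) (σ : Submodule K V → Submodule K V) (H : Submodule K V) :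
    Set (Set (Pt K V)) :=
  (blockAPt σ H '' setA e H) ∪
    {B | ∃ W : Submodule K V, Module.finrank K W = e + 1 ∧ W ≤ H ∧ B = projPt (W : Set V)}

open Classical in
/-- The map `f` sending `W ∈ 𝒜` to `[σ(W ∩ H) ∪ (W \ H)]` and `W ∈ ℬ` to `[σ(W)]`. -/
noncomputable def fJTPt {K V : Type*} [Field K] [AddCommGroup V] [Module K V]
    (σ : Submodule K V → Submodule K V) (e : ℕ) (H : Submodule K V)
    (W : Submodule K V) : Set (Pt K V) :=
  if W ∈ setA e H then blockAPt σ H W else blockBPt σ W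

/-!
Every vertex `W ∈ 𝒜 ∪ ℬ` has the block `f W = [σ(W ∩ H)] ∪ ([W] \ [H])` (for `W ≤ H` the second
part is empty). Its points in `H` recover `σ(W ∩ H)`, hence `W ∩ H`, and its points off `H`
recover the rest of `W`; so `f` is injective and `g` permutes the finite vertex set.

Two blocks meet in `[σ((W₁ ∩ H) + (W₂ ∩ H))]` together with the points of `W₁ ∩ W₂` off `H`.
An `n`-space has `[n]_q = 1 + q + ⋯ + q^(n-1)` points, so the meet has `[d]_q`, `[d + 1]_q` or
`[d + 2]_q` points, `d = dim (W₁ ∩ W₂)`, in the cases `𝒜𝒜`, `𝒜ℬ`, `ℬℬ`, and in each case the two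
vertices are adjacent exactly when this number is `[e]_q`. A permutation `α` of the points
preserves the sizes of these intersections, so `g = f⁻¹ ∘ α ∘ f` preserves adjacency.
-/

open Module

namespace TwistedGrassmann

variable {K V : Type*} [Field K] [AddCommGroup V] [Module K V]

def ptsIn (U : Submodule K V) : Set (Pt K V) :=
  {P | P.1 ≤ U}

theorem projPt_coe (U : Submodule K V) : projPt (U : Set V) = ptsIn U := by
  ext P
  exact SetLike.coe_subset_coe

theorem ptsIn_inf (U₁ U₂ : Submodule K V) : ptsIn (U₁ ⊓ U₂) = ptsIn U₁ ∩ ptsIn U₂ := by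
  ext P
  exact le_inf_iff (α := Submodule K V)

def lineOf {x : V} (hx : x ≠ 0) : Pt K V :=
  ⟨K ∙ x, finrank_span_singleton hx⟩

theorem lineOf_mem_ptsIn {x : V} (hx : x ≠ 0) {U : Submodule K V} :
    lineOf hx ∈ ptsIn U ↔ x ∈ U :=
  Submodule.span_singleton_le_iff_mem x U

theorem ptsIn_subset_ptsIn {U₁ U₂ : Submodule K V} : ptsIn U₁ ⊆ ptsIn U₂ ↔ U₁ ≤ U₂ := by
  refine ⟨fun h x hx => ?_, fun h P hP => le_trans hP h⟩
  rcases eq_or_ne x 0 with rfl | hx0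
  · exact U₂.zero_mem
  · exact (lineOf_mem_ptsIn hx0).1 (h ((lineOf_mem_ptsIn hx0).2 hx))

theorem ptsIn_injective : Function.Injective (ptsIn : Submodule K V → Set (Pt K V)) :=
  fun _ _ h => le_antisymm (ptsIn_subset_ptsIn.1 h.le) (ptsIn_subset_ptsIn.1 h.ge)

theorem le_of_inf_le_of_ptsIn_sdiff_subset {H U₁ U₂ : Submodule K V} (hH : U₁ ⊓ H ≤ U₂)
    (h : ptsIn U₁ \ ptsIn H ⊆ ptsIn U₂) : U₁ ≤ U₂ := by
  intro x hx
  by_cases hxH : x ∈ H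
  · exact hH ⟨hx, hxH⟩
  · have hx0 : x ≠ 0 := fun h0 => hxH (h0 ▸ H.zero_mem)
    exact (lineOf_mem_ptsIn hx0).1
      (h ⟨(lineOf_mem_ptsIn hx0).2 hx, mt (lineOf_mem_ptsIn hx0).1 hxH⟩)

theorem eq_zero_of_mem_of_notMem_ptsIn {P : Pt K V} {H : Submodule K V} (hP : P ∉ ptsIn H)
    {x : V} (hxP : x ∈ P.1) (hxH : x ∈ H) : x = 0 :=
  Submodule.disjoint_def.1
    ((Submodule.isAtom_iff_finrank_eq_one.2 P.2).not_le_iff_disjoint.1 hP) x hxP hxH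

theorem projPt_union_sdiff {S H : Submodule K V} (hS : S ≤ H) (W : Submodule K V) :
    projPt ((S : Set V) ∪ ((W : Set V) \ H)) = ptsIn S ∪ (ptsIn W \ ptsIn H) := by
  ext P
  constructor
  · intro hP
    by_cases hPH : P ∈ ptsIn H
    · refine Or.inl fun x hx => (hP hx).resolve_right fun hW => hW.2 (hPH hx)
    · refine Or.inr ⟨fun x hx => ?_, hPH⟩
      by_cases hxH : x ∈ H
      · rw [eq_zero_of_mem_of_notMem_ptsIn hPH hx hxH]
        exact W.zero_mem
      · exact ((hP hx).resolve_left fun hxS => hxH (hS hxS)).1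
  · rintro (hPS | ⟨hPW, hPH⟩) x hx
    · exact Or.inl (hPS hx)
    · by_cases hxH : x ∈ H
      · rw [eq_zero_of_mem_of_notMem_ptsIn hPH hx hxH]
        exact Or.inl S.zero_mem
      · exact Or.inr ⟨hPW hx, hxH⟩

noncomputable def numPoints (K : Type*) (n : ℕ) : ℕ :=
  ∑ i ∈ Finset.range n, Nat.card K ^ i

theorem numPoints_strictMono [Finite K] : StrictMono (numPoints K) :=
  strictMono_nat_of_lt_succ fun n => by
    rw [numPoints, numPoints, Finset.sum_range_succ]
    exact Nat.lt_add_of_pos_right (pow_pos Nat.card_pos n)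

def ptsInEquivPt (U : Submodule K V) : ptsIn U ≃ Pt K U where
  toFun P := ⟨P.1.1.comap U.subtype,
    (Submodule.comapSubtypeEquivOfLe P.2).finrank_eq.trans P.1.2⟩
  invFun Q := ⟨⟨Q.1.map U.subtype,
    (Submodule.equivMapOfInjective _ U.injective_subtype Q.1).finrank_eq.symm.trans Q.2⟩,
    Submodule.map_subtype_le U Q.1⟩
  left_inv P := by
    ext : 2
    exact (Submodule.map_comap_subtype U P.1.1).trans (inf_eq_right.2 P.2)
  right_inv Q := Subtype.ext (Submodule.comap_map_eq_of_injective U.injective_subtype Q.1)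

theorem ncard_ptsIn [Finite K] (U : Submodule K V) :
    (ptsIn U).ncard = numPoints K (finrank K U) := by
  rw [← Nat.card_coe_set_eq, Nat.card_congr ((ptsInEquivPt U).trans
    (Projectivization.equivSubmodule K U).symm)]
  exact Projectivization.card_of_finrank K U rfl

section adjacency

variable {e : ℕ} {H W₁ W₂ : Submodule K V}

theorem notMem_setA_of_mem_setB {W : Submodule K V} (hW : W ∈ setB e H) : W ∉ setA e H :=
  fun hA => hA.2 hW.2

theorem notMem_setB_of_mem_setA {W : Submodule K V} (hW : W ∈ setA e H) : W ∉ setB e H :=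
  fun hB => hW.2 hB.2

theorem twistedAdj_comm : twistedAdj e H W₁ W₂ ↔ twistedAdj e H W₂ W₁ := by
  simp only [twistedAdj]
  rw [inf_comm W₂ W₁]
  tauto

theorem twistedAdj_iff_of_mem_setA_of_mem_setA (h₁ : W₁ ∈ setA e H) (h₂ : W₂ ∈ setA e H) :
    twistedAdj e H W₁ W₂ ↔ finrank K ↥(W₁ ⊓ W₂) = e := by
  simp [twistedAdj, h₁, h₂, notMem_setB_of_mem_setA h₁, notMem_setB_of_mem_setA h₂]

theorem twistedAdj_iff_of_mem_setA_of_mem_setB [FiniteDimensional K V] (he : 1 ≤ e)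
    (h₁ : W₁ ∈ setA e H) (h₂ : W₂ ∈ setB e H) :
    twistedAdj e H W₁ W₂ ↔ finrank K ↥(W₁ ⊓ W₂) + 1 = e := by
  simp only [twistedAdj, h₁, h₂, notMem_setB_of_mem_setA h₁, notMem_setA_of_mem_setB h₂,
    true_and, false_and, false_or, or_false, ← inf_eq_right (a := W₁)]
  refine ⟨fun h => ?_, fun h => Submodule.eq_of_le_of_finrank_eq inf_le_right ?_⟩
  · rw [h, h₂.1]
    omega
  · rw [h₂.1]
    omega

theorem twistedAdj_iff_of_mem_setB_of_mem_setB (he : 2 ≤ e)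
    (h₁ : W₁ ∈ setB e H) (h₂ : W₂ ∈ setB e H) :
    twistedAdj e H W₁ W₂ ↔ finrank K ↥(W₁ ⊓ W₂) + 2 = e := by
  simp only [twistedAdj, h₁, h₂, notMem_setA_of_mem_setB h₁, notMem_setA_of_mem_setB h₂,
    true_and, false_and, false_or]
  omega

end adjacency

def block (σ : Submodule K V → Submodule K V) (H W : Submodule K V) : Set (Pt K V) :=
  ptsIn (σ (W ⊓ H)) ∪ (ptsIn W \ ptsIn H)

section block

variable {σ : Submodule K V → Submodule K V} {H : Submodule K V}

theorem fJTPt_eq_block (hσle : ∀ W ≤ H, σ W ≤ H) {e : ℕ} {W : Submodule K V}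
    (hW : W ∈ setA e H ∪ setB e H) : fJTPt σ e H W = block σ H W := by
  rcases hW with hA | hB
  · rw [fJTPt, if_pos hA, blockAPt, projPt_union_sdiff (hσle _ inf_le_right), block]
  · rw [fJTPt, if_neg (notMem_setA_of_mem_setB hB), blockBPt, projPt_coe, block, inf_eq_left.2 hB.2,
      Set.sdiff_eq_empty.2 (ptsIn_subset_ptsIn.2 hB.2), Set.union_empty]

theorem block_inter_ptsIn (hσle : ∀ W ≤ H, σ W ≤ H) (W : Submodule K V) :
    block σ H W ∩ ptsIn H = ptsIn (σ (W ⊓ H)) := by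
  rw [block, Set.union_inter_distrib_right, Set.sdiff_inter_self, Set.union_empty,
    Set.inter_eq_left.2 (ptsIn_subset_ptsIn.2 (hσle _ inf_le_right))]

theorem block_sdiff_ptsIn (hσle : ∀ W ≤ H, σ W ≤ H) (W : Submodule K V) :
    block σ H W \ ptsIn H = ptsIn W \ ptsIn H := by
  rw [block, Set.union_sdiff_distrib, sdiff_idem,
    Set.sdiff_eq_empty.2 (ptsIn_subset_ptsIn.2 (hσle _ inf_le_right)), Set.empty_union]

theorem block_injective (hσle : ∀ W ≤ H, σ W ≤ H) (hσinv : ∀ W ≤ H, σ (σ W) = W) :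
    Function.Injective (block σ H) := by
  intro W₁ W₂ h
  have hH : W₁ ⊓ H = W₂ ⊓ H := by
    have hσ : σ (W₁ ⊓ H) = σ (W₂ ⊓ H) := ptsIn_injective <| by
      rw [← block_inter_ptsIn hσle, h, block_inter_ptsIn hσle]
    rw [← hσinv _ inf_le_right, hσ, hσinv _ inf_le_right]
  have hout : ptsIn W₁ \ ptsIn H = ptsIn W₂ \ ptsIn H := by
    rw [← block_sdiff_ptsIn hσle, h, block_sdiff_ptsIn hσle]
  exact le_antisymm
    (le_of_inf_le_of_ptsIn_sdiff_subset (hH.le.trans inf_le_left)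
      (hout.subset.trans Set.sdiff_subset))
    (le_of_inf_le_of_ptsIn_sdiff_subset (hH.ge.trans inf_le_left)
      (hout.superset.trans Set.sdiff_subset))

theorem block_inter_block (hσle : ∀ W ≤ H, σ W ≤ H)
    (hσinf : ∀ W₁ W₂ : Submodule K V, W₁ ≤ H → W₂ ≤ H → σ W₁ ⊓ σ W₂ = σ (W₁ ⊔ W₂))
    (W₁ W₂ : Submodule K V) :
    block σ H W₁ ∩ block σ H W₂ =
      ptsIn (σ (W₁ ⊓ H ⊔ W₂ ⊓ H)) ∪ (ptsIn (W₁ ⊓ W₂) \ ptsIn H) := by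
  have h₁ := ptsIn_subset_ptsIn.2 (hσle (W₁ ⊓ H) inf_le_right)
  have h₂ := ptsIn_subset_ptsIn.2 (hσle (W₂ ⊓ H) inf_le_right)
  rw [← hσinf _ _ inf_le_right inf_le_right]
  ext P
  simp only [block, ptsIn_inf, Set.mem_inter_iff, Set.mem_union, Set.mem_sdiff]
  have := @h₁ P
  have := @h₂ P
  tauto

end block

section finiteDimensional

variable [FiniteDimensional K V] {e : ℕ} {σ : Submodule K V → Submodule K V} {H : Submodule K V}

theorem finrank_inf_of_mem_setA (hHV : finrank K H + 1 = finrank K V) {W : Submodule K V}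
    (hW : W ∈ setA e H) : finrank K ↥(W ⊓ H) = e := by
  have hlt : finrank K H < finrank K ↥(W ⊔ H) :=
    Submodule.finrank_lt_finrank_of_lt (lt_of_le_of_ne le_sup_right
      fun h => hW.2 (le_sup_left.trans h.ge))
  have hle := Submodule.finrank_le (W ⊔ H)
  have hsum := Submodule.finrank_sup_add_finrank_inf_eq W H
  have := hW.1
  omega

section counting

variable [Finite K]

instance : Finite (Pt K V) :=
  haveI : Finite V := Module.finite_of_finite K
  Subtype.finite

theorem ncard_ptsIn_sdiff (X H : Submodule K V) :
    (ptsIn X \ ptsIn H).ncard + numPoints K (finrank K ↥(X ⊓ H)) = numPoints K (finrank K X) := by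
  rw [← ncard_ptsIn, ← ncard_ptsIn, ptsIn_inf, add_comm]
  exact Set.ncard_inter_add_ncard_sdiff_eq_ncard _ _

theorem ncard_block_inter_block (hσle : ∀ W ≤ H, σ W ≤ H)
    (hσinf : ∀ W₁ W₂ : Submodule K V, W₁ ≤ H → W₂ ≤ H → σ W₁ ⊓ σ W₂ = σ (W₁ ⊔ W₂))
    (W₁ W₂ : Submodule K V) :
    (block σ H W₁ ∩ block σ H W₂).ncard =
      numPoints K (finrank K ↥(σ (W₁ ⊓ H ⊔ W₂ ⊓ H))) + (ptsIn (W₁ ⊓ W₂) \ ptsIn H).ncard := by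
  have hS := ptsIn_subset_ptsIn.2 (hσle (W₁ ⊓ H ⊔ W₂ ⊓ H) (sup_le inf_le_right inf_le_right))
  rw [block_inter_block hσle hσinf, Set.ncard_union_eq (Set.disjoint_sdiff_right.mono_left hS),
    ncard_ptsIn]

variable {W₁ W₂ : Submodule K V}

theorem ncard_block_inter_of_mem_setA_of_mem_setA (hHV : finrank K H + 1 = finrank K V)
    (hσle : ∀ W ≤ H, σ W ≤ H)
    (hσinf : ∀ W₁ W₂ : Submodule K V, W₁ ≤ H → W₂ ≤ H → σ W₁ ⊓ σ W₂ = σ (W₁ ⊔ W₂))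
    (hσrank : ∀ W ≤ H, finrank K ↥(σ W) = 2 * e - finrank K ↥W)
    (h₁ : W₁ ∈ setA e H) (h₂ : W₂ ∈ setA e H) :
    (block σ H W₁ ∩ block σ H W₂).ncard = numPoints K (finrank K ↥(W₁ ⊓ W₂)) := by
  have hsum := Submodule.finrank_sup_add_finrank_inf_eq (W₁ ⊓ H) (W₂ ⊓ H)
  rw [inf_inf_inf_comm, inf_idem, finrank_inf_of_mem_setA hHV h₁,
    finrank_inf_of_mem_setA hHV h₂] at hsum
  have hσS : finrank K ↥(σ (W₁ ⊓ H ⊔ W₂ ⊓ H)) = finrank K ↥(W₁ ⊓ W₂ ⊓ H) := by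
    rw [hσrank _ (sup_le inf_le_right inf_le_right)]
    omega
  rw [ncard_block_inter_block hσle hσinf, hσS, add_comm, ncard_ptsIn_sdiff]

theorem ncard_block_inter_of_mem_setA_of_mem_setB (he : 1 ≤ e)
    (hHV : finrank K H + 1 = finrank K V) (hσle : ∀ W ≤ H, σ W ≤ H)
    (hσinf : ∀ W₁ W₂ : Submodule K V, W₁ ≤ H → W₂ ≤ H → σ W₁ ⊓ σ W₂ = σ (W₁ ⊔ W₂))
    (hσrank : ∀ W ≤ H, finrank K ↥(σ W) = 2 * e - finrank K ↥W)
    (h₁ : W₁ ∈ setA e H) (h₂ : W₂ ∈ setB e H) :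
    (block σ H W₁ ∩ block σ H W₂).ncard = numPoints K (finrank K ↥(W₁ ⊓ W₂) + 1) := by
  have hX : W₁ ⊓ W₂ ≤ H := inf_le_right.trans h₂.2
  have hsum := Submodule.finrank_sup_add_finrank_inf_eq (W₁ ⊓ H) W₂
  rw [inf_right_comm, inf_eq_left.2 hX, finrank_inf_of_mem_setA hHV h₁, h₂.1] at hsum
  have hσS : finrank K ↥(σ (W₁ ⊓ H ⊔ W₂)) = finrank K ↥(W₁ ⊓ W₂) + 1 := by
    rw [hσrank _ (sup_le inf_le_right h₂.2)]
    omega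
  rw [ncard_block_inter_block hσle hσinf, inf_eq_left.2 h₂.2, hσS,
    Set.sdiff_eq_empty.2 (ptsIn_subset_ptsIn.2 hX), Set.ncard_empty, add_zero]

theorem ncard_block_inter_of_mem_setB_of_mem_setB (he : 1 ≤ e)
    (hσle : ∀ W ≤ H, σ W ≤ H)
    (hσinf : ∀ W₁ W₂ : Submodule K V, W₁ ≤ H → W₂ ≤ H → σ W₁ ⊓ σ W₂ = σ (W₁ ⊔ W₂))
    (hσrank : ∀ W ≤ H, finrank K ↥(σ W) = 2 * e - finrank K ↥W)
    (h₁ : W₁ ∈ setB e H) (h₂ : W₂ ∈ setB e H) :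
    (block σ H W₁ ∩ block σ H W₂).ncard = numPoints K (finrank K ↥(W₁ ⊓ W₂) + 2) := by
  have hX : W₁ ⊓ W₂ ≤ H := inf_le_right.trans h₂.2
  have hsum := Submodule.finrank_sup_add_finrank_inf_eq W₁ W₂
  rw [h₁.1, h₂.1] at hsum
  have hσS : finrank K ↥(σ (W₁ ⊔ W₂)) = finrank K ↥(W₁ ⊓ W₂) + 2 := by
    rw [hσrank _ (sup_le h₁.2 h₂.2)]
    omega
  rw [ncard_block_inter_block hσle hσinf, inf_eq_left.2 h₁.2, inf_eq_left.2 h₂.2, hσS,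
    Set.sdiff_eq_empty.2 (ptsIn_subset_ptsIn.2 hX), Set.ncard_empty, add_zero]

theorem twistedAdj_iff_ncard_inter_eq (he : 2 ≤ e) (hHV : finrank K H + 1 = finrank K V)
    (hσle : ∀ W ≤ H, σ W ≤ H)
    (hσinf : ∀ W₁ W₂ : Submodule K V, W₁ ≤ H → W₂ ≤ H → σ W₁ ⊓ σ W₂ = σ (W₁ ⊔ W₂))
    (hσrank : ∀ W ≤ H, finrank K ↥(σ W) = 2 * e - finrank K ↥W)
    (h₁ : W₁ ∈ setA e H ∪ setB e H) (h₂ : W₂ ∈ setA e H ∪ setB e H) :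
    twistedAdj e H W₁ W₂ ↔ (fJTPt σ e H W₁ ∩ fJTPt σ e H W₂).ncard = numPoints K e := by
  have hinj := (numPoints_strictMono (K := K)).injective
  rw [fJTPt_eq_block hσle h₁, fJTPt_eq_block hσle h₂]
  rcases h₁ with h₁ | h₁ <;> rcases h₂ with h₂ | h₂
  · rw [twistedAdj_iff_of_mem_setA_of_mem_setA h₁ h₂,
      ncard_block_inter_of_mem_setA_of_mem_setA hHV hσle hσinf hσrank h₁ h₂, hinj.eq_iff]
  · rw [twistedAdj_iff_of_mem_setA_of_mem_setB (by omega) h₁ h₂,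
      ncard_block_inter_of_mem_setA_of_mem_setB (by omega) hHV hσle hσinf hσrank h₁ h₂,
      hinj.eq_iff]
  · rw [twistedAdj_comm, Set.inter_comm, twistedAdj_iff_of_mem_setA_of_mem_setB (by omega) h₂ h₁,
      ncard_block_inter_of_mem_setA_of_mem_setB (by omega) hHV hσle hσinf hσrank h₂ h₁,
      hinj.eq_iff]
  · rw [twistedAdj_iff_of_mem_setB_of_mem_setB he h₁ h₂,
      ncard_block_inter_of_mem_setB_of_mem_setB (by omega) hσle hσinf hσrank h₁ h₂, hinj.eq_iff]

end counting

end finiteDimensional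

end TwistedGrassmann

open TwistedGrassmann

/-- `f⁻¹ ∘ α ∘ f` is modelled as any map `g` on `𝒜 ∪ ℬ` satisfying `f ∘ g = α ∘ f` there. -/
theorem stmt11_general (e : ℕ) (he : 2 ≤ e)
    (K V : Type*) [Field K] [Fintype K]
    [AddCommGroup V] [Module K V] [FiniteDimensional K V]
    (hV : Module.finrank K V = 2 * e + 1)
    (H : Submodule K V) (hH : Module.finrank K ↥H = 2 * e)
    (σ : Submodule K V → Submodule K V)
    (hσle : ∀ W ≤ H, σ W ≤ H)
    (hσinv : ∀ W ≤ H, σ (σ W) = W)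
    (hσinf : ∀ W₁ W₂ : Submodule K V, W₁ ≤ H → W₂ ≤ H → σ W₁ ⊓ σ W₂ = σ (W₁ ⊔ W₂))
    (hσrank : ∀ W ≤ H, Module.finrank K ↥(σ W) = 2 * e - Module.finrank K ↥W)
    (α : Equiv.Perm (Pt K V))
    (g : Submodule K V → Submodule K V)
    (hg : ∀ W ∈ setA e H ∪ setB e H, g W ∈ setA e H ∪ setB e H ∧
      fJTPt σ e H (g W) = (fun P => α P) '' fJTPt σ e H W) :
    Set.BijOn g (setA e H ∪ setB e H) (setA e H ∪ setB e H) ∧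
    ∀ W₁ ∈ setA e H ∪ setB e H, ∀ W₂ ∈ setA e H ∪ setB e H,
      ((W₁ ≠ W₂ ∧ twistedAdj e H W₁ W₂) ↔ (g W₁ ≠ g W₂ ∧ twistedAdj e H (g W₁) (g W₂))) := by
  have : Finite V := Module.finite_of_finite K
  have hHV : finrank K H + 1 = finrank K V := by omega
  have hginj : Set.InjOn g (setA e H ∪ setB e H) := fun W₁ h₁ W₂ h₂ hgW => by
    apply block_injective hσle hσinv
    rw [← fJTPt_eq_block hσle h₁, ← fJTPt_eq_block hσle h₂]
    exact Set.image_injective.2 α.injective (by rw [← (hg W₁ h₁).2, ← (hg W₂ h₂).2, hgW])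
  refine ⟨((Set.toFinite _).injOn_iff_bijOn_of_mapsTo fun W hW => (hg W hW).1).1 hginj,
    fun W₁ h₁ W₂ h₂ => ?_⟩
  have hcard : (fJTPt σ e H (g W₁) ∩ fJTPt σ e H (g W₂)).ncard =
      (fJTPt σ e H W₁ ∩ fJTPt σ e H W₂).ncard := by
    rw [(hg W₁ h₁).2, (hg W₂ h₂).2, ← Set.image_inter α.injective,
      Set.ncard_image_of_injective _ α.injective]
  rw [hginj.ne_iff h₁ h₂, twistedAdj_iff_ncard_inter_eq he hHV hσle hσinf hσrank h₁ h₂,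
    twistedAdj_iff_ncard_inter_eq he hHV hσle hσinf hσrank (hg W₁ h₁).1 (hg W₂ h₂).1, hcard]

/-- If `α` is an automorphism of the Jungnickel–Tonchev design and `f` is
the bijection from `𝒜 ∪ ℬ` onto the block set, then `f⁻¹ ∘ α ∘ f` (formalized as any map
`g` on `𝒜 ∪ ℬ` satisfying `f ∘ g = α ∘ f` there) is an automorphism of the twisted
Grassmann graph `J̃_q(2e+1, e)`. -/
theorem stmt11 (q e : ℕ) (hq : ∃ p n : ℕ, p.Prime ∧ 0 < n ∧ q = p ^ n) (he : 2 ≤ e)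
    (K V : Type*) [Field K] [Fintype K] (hK : Fintype.card K = q)
    [AddCommGroup V] [Module K V] [FiniteDimensional K V]
    (hV : Module.finrank K V = 2 * e + 1)
    (H : Submodule K V) (hH : Module.finrank K ↥H = 2 * e)
    (σ : Submodule K V → Submodule K V)
    (hσle : ∀ W ≤ H, σ W ≤ H)
    (hσinv : ∀ W ≤ H, σ (σ W) = W)
    (hσanti : ∀ W₁ W₂ : Submodule K V, W₁ ≤ H → W₂ ≤ H → W₁ ≤ W₂ → σ W₂ ≤ σ W₁)
    (hσinf : ∀ W₁ W₂ : Submodule K V, W₁ ≤ H → W₂ ≤ H → σ W₁ ⊓ σ W₂ = σ (W₁ ⊔ W₂))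
    (hσrank : ∀ W ≤ H, Module.finrank K ↥(σ W) = 2 * e - Module.finrank K ↥W)
    (α : Equiv.Perm (Pt K V))
    (hα : ∀ B ∈ blocksJTPt e σ H, (fun P => α P) '' B ∈ blocksJTPt e σ H)
    (g : Submodule K V → Submodule K V)
    (hg : ∀ W ∈ setA e H ∪ setB e H, g W ∈ setA e H ∪ setB e H ∧
      fJTPt σ e H (g W) = (fun P => α P) '' fJTPt σ e H W) :
    Set.BijOn g (setA e H ∪ setB e H) (setA e H ∪ setB e H) ∧
    ∀ W₁ ∈ setA e H ∪ setB e H, ∀ W₂ ∈ setA e H ∪ setB e H,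
      ((W₁ ≠ W₂ ∧ twistedAdj e H W₁ W₂) ↔ (g W₁ ≠ g W₂ ∧ twistedAdj e H (g W₁) (g W₂))) :=
  stmt11_general e he K V hV H hH σ hσle hσinv hσinf hσrank α g hg
end

section
/- The blocks of the Jungnickel–Tonchev design are pairwise distinct: the map f sending W ∈ 𝒜 to [σ(W∩H) ∪ (W∖H)] and W ∈ ℬ̂ (the set of (e+1)-dimensional subspaces of H) to [W] is injective on 𝒜 ∪ ℬ̂, and the block families 𝒜' and ℬ' are disjoint; in particular the design has no repeated blocks. -/
open Classical in
/-- The map sending `W ∈ 𝒜` to the block `[σ(W ∩ H) ∪ (W \ H)]` and an (e+1)-dimensional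
subspace `W` of `H` to the block `[W]`. -/
noncomputable def gJT {K V : Type*} [Field K] [AddCommGroup V] [Module K V]
    (σ : Submodule K V → Submodule K V) (e : ℕ) (H : Submodule K V)
    (W : Submodule K V) : Set (Submodule K V) :=
  if W ∈ setA e H then blockA σ H W else projPts K (W : Set V)

/-- The blocks of the Jungnickel–Tonchev design are pairwise distinct:
the map sending `W ∈ 𝒜` to `[σ(W ∩ H) ∪ (W \ H)]` and `W ∈ ℬ̂` (the (e+1)-dimensional
subspaces of `H`) to `[W]` is injective on `𝒜 ∪ ℬ̂`, and the block families `𝒜'` and `ℬ'`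
are disjoint; in particular the design has no repeated blocks. -/
theorem stmt13 (q e : ℕ) (hq : ∃ p n : ℕ, p.Prime ∧ 0 < n ∧ q = p ^ n) (he : 2 ≤ e)
    (K V : Type*) [Field K] [Fintype K] (hK : Fintype.card K = q)
    [AddCommGroup V] [Module K V] [FiniteDimensional K V]
    (hV : Module.finrank K V = 2 * e + 1)
    (H : Submodule K V) (hH : Module.finrank K ↥H = 2 * e)
    (σ : Submodule K V → Submodule K V)
    (hσle : ∀ W ≤ H, σ W ≤ H)
    (hσinv : ∀ W ≤ H, σ (σ W) = W)
    (hσanti : ∀ W₁ W₂ : Submodule K V, W₁ ≤ H → W₂ ≤ H → W₁ ≤ W₂ → σ W₂ ≤ σ W₁)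
    (hσinf : ∀ W₁ W₂ : Submodule K V, W₁ ≤ H → W₂ ≤ H → σ W₁ ⊓ σ W₂ = σ (W₁ ⊔ W₂))
    (hσrank : ∀ W ≤ H, Module.finrank K ↥(σ W) = 2 * e - Module.finrank K ↥W)
    :
    Set.InjOn (gJT σ e H)
      (setA e H ∪ {W : Submodule K V | Module.finrank K W = e + 1 ∧ W ≤ H}) ∧
    Disjoint (blockA σ H '' setA e H)
      {B : Set (Submodule K V) |
        ∃ W : Submodule K V, Module.finrank K W = e + 1 ∧ W ≤ H ∧ B = projPts K (W : Set V)} := by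
  -- the span of a vector of W outside H is in blockA
  have hspan_mem : ∀ (W : Submodule K V) (v : V), v ∈ W → v ∉ H →
      Submodule.span K {v} ∈ blockA σ H W := by
    intro W v hvW hvH
    have hv0 : v ≠ 0 := fun h => hvH (h ▸ H.zero_mem)
    refine ⟨finrank_span_singleton hv0, ?_⟩
    intro x hx
    obtain ⟨c, rfl⟩ := Submodule.mem_span_singleton.mp hx
    by_cases hc : c = 0
    · left; simp [hc, (σ (W ⊓ H)).zero_mem]
    · right
      refine ⟨W.smul_mem c hvW, fun hxH => hvH ?_⟩
      have h2 : c⁻¹ • (c • v) ∈ H := H.smul_mem _ hxH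
      simpa [smul_smul, inv_mul_cancel₀ hc] using h2
  -- block points not in H determine W \ H
  have hkey : ∀ W : Submodule K V, ((W : Set V) \ (H : Set V)) =
      {v | v ∉ H ∧ ∃ P ∈ blockA σ H W, v ∈ P} := by
    intro W
    ext v
    constructor
    · rintro ⟨hvW, hvH⟩
      exact ⟨hvH, Submodule.span K {v}, hspan_mem W v hvW hvH,
        Submodule.mem_span_singleton_self v⟩
    · rintro ⟨hvH, P, ⟨hP1, hPsub⟩, hvP⟩
      rcases hPsub hvP with h | h
      · exact absurd (hσle (W ⊓ H) inf_le_right h) hvH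
      · exact h
  -- injectivity of blockA on setA
  have hAinj : ∀ W₁ W₂ : Submodule K V, W₁ ∈ setA e H → W₂ ∈ setA e H →
      blockA σ H W₁ = blockA σ H W₂ → W₁ = W₂ := by
    intro W₁ W₂ h₁ h₂ hEq
    have hdiff : (W₁ : Set V) \ (H : Set V) = (W₂ : Set V) \ (H : Set V) := by
      rw [hkey, hkey, hEq]
    obtain ⟨u, huW, huH⟩ := SetLike.not_le_iff_exists.mp h₁.2
    have key : ∀ (A B : Submodule K V), (A : Set V) \ (H : Set V) = (B : Set V) \ (H : Set V) →
        ∀ u : V, u ∈ A → u ∉ H → A ≤ B := by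
      intro A B hAB u huA huH w hwA
      by_cases hwH : w ∈ H
      · have h1 : w + u ∈ (A : Set V) \ (H : Set V) :=
          ⟨A.add_mem hwA huA, fun h => huH (by simpa using H.sub_mem h hwH)⟩
        have h2 : u ∈ (A : Set V) \ (H : Set V) := ⟨huA, huH⟩
        rw [hAB] at h1 h2
        have h3 := B.sub_mem h1.1 h2.1
        simpa using h3
      · have h4 : w ∈ (A : Set V) \ (H : Set V) := ⟨hwA, hwH⟩
        rw [hAB] at h4; exact h4.1
    have hu2 : u ∈ W₂ := by
      have h5 : u ∈ (W₂ : Set V) \ (H : Set V) := hdiff ▸ ⟨huW, huH⟩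
      exact h5.1
    exact le_antisymm (key W₁ W₂ hdiff u huW huH) (key W₂ W₁ hdiff.symm u hu2 huH)
  -- injectivity of projPts
  have hPinj : ∀ W₁ W₂ : Submodule K V,
      projPts K (W₁ : Set V) = projPts K (W₂ : Set V) → W₁ = W₂ := by
    have key : ∀ A B : Submodule K V,
        projPts K (A : Set V) = projPts K (B : Set V) → A ≤ B := by
      intro A B h v hv
      by_cases hv0 : v = 0
      · simp [hv0]
      · have hmem : Submodule.span K {v} ∈ projPts K (A : Set V) :=
          ⟨finrank_span_singleton hv0,
            SetLike.coe_subset_coe.mpr (Submodule.span_le.mpr (Set.singleton_subset_iff.mpr hv))⟩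
        rw [h] at hmem
        exact hmem.2 (Submodule.mem_span_singleton_self v)
    exact fun W₁ W₂ h => le_antisymm (key _ _ h) (key _ _ h.symm)
  -- cross case
  have hcross : ∀ W₁ W₂ : Submodule K V, ¬ W₁ ≤ H → W₂ ≤ H →
      blockA σ H W₁ ≠ projPts K (W₂ : Set V) := by
    intro W₁ W₂ h₁ h₂ hEq
    obtain ⟨u, huW, huH⟩ := SetLike.not_le_iff_exists.mp h₁
    have hmem := hspan_mem W₁ u huW huH
    rw [hEq] at hmem
    exact huH (h₂ (hmem.2 (Submodule.mem_span_singleton_self u)))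
  constructor
  · intro W₁ hW₁ W₂ hW₂ hEq
    unfold gJT at hEq
    rcases hW₁ with h₁ | h₁ <;> rcases hW₂ with h₂ | h₂
    · rw [if_pos h₁, if_pos h₂] at hEq; exact hAinj _ _ h₁ h₂ hEq
    · have hn : W₂ ∉ setA e H := fun h => h.2 h₂.2
      rw [if_pos h₁, if_neg hn] at hEq
      exact absurd hEq (hcross _ _ h₁.2 h₂.2)
    · have hn : W₁ ∉ setA e H := fun h => h.2 h₁.2
      rw [if_neg hn, if_pos h₂] at hEq
      exact absurd hEq.symm (hcross _ _ h₂.2 h₁.2)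
    · have hn₁ : W₁ ∉ setA e H := fun h => h.2 h₁.2
      have hn₂ : W₂ ∉ setA e H := fun h => h.2 h₂.2
      rw [if_neg hn₁, if_neg hn₂] at hEq
      exact hPinj _ _ hEq
  · rw [Set.disjoint_left]
    rintro B ⟨W₁, hW₁, rfl⟩ ⟨W₂, _, h₂, hB⟩
    exact hcross W₁ W₂ hW₁.2 h₂ hB
end
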